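/- arXiv:math/0502391 — 6 statements merged into one kernel-verified Lean document; each statement's English description precedes it below -/
import Mathlib

section
/- Assume the complex variety V_KKT is a finite set and I_KKT is a radical ideal (I_KKT = √I_KKT). If f, regarded as an element of ℝ[x, λ, ν], is nonnegative at every point of V^ℝ_KKT ∩ H, then f belongs to the linear cone M_KKT. -/
/-!
Let `V ⊆ ℂ^N` be the finite complex zero set of `I`. Interpolating on `V` gives real polynomials
`q₀, q_j` such that `q₀²` equals `f` on `V` except at the real points with `f < 0`, and at those
points (where some `h_j` is negative) `Σ_j q_j² h_j` equals `f`. The square roots at non-real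
points are chosen compatibly with complex conjugation, so that the interpolants can be taken
real. Then `f - q₀² - Σ_j q_j² h_j` vanishes on `V`, hence lies in `√I = I` by the
Nullstellensatz.
-/

open MvPolynomial Filter

noncomputable section

/-- Variables `x_1,…,x_n, λ_1,…,λ_s, ν_1,…,ν_t`. -/
abbrev KVar (n s t : ℕ) := Sum (Fin n) (Sum (Fin s) (Fin t))

/-- The polynomial ring `ℝ[x,λ,ν]`. -/
abbrev KPoly (n s t : ℕ) := MvPolynomial (KVar n s t) ℝ

/-- Lift a polynomial in `ℝ[x]` to `ℝ[x,λ,ν]`. -/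
def liftX (n s t : ℕ) (p : MvPolynomial (Fin n) ℝ) : KPoly n s t :=
  rename Sum.inl p

/-- The variable `λ_i`. -/
def lamX (n s t : ℕ) (i : Fin s) : KPoly n s t := X (Sum.inr (Sum.inl i))

/-- The variable `ν_j`. -/
def nuX (n s t : ℕ) (j : Fin t) : KPoly n s t := X (Sum.inr (Sum.inr j))

/-- `F_k = ∂f/∂x_k + Σ_i λ_i ∂g_i/∂x_k − Σ_j ν_j ∂h_j/∂x_k`. -/
def FF (n s t : ℕ) (f : MvPolynomial (Fin n) ℝ) (g : Fin s → MvPolynomial (Fin n) ℝ)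
    (h : Fin t → MvPolynomial (Fin n) ℝ) (k : Fin n) : KPoly n s t :=
  liftX n s t (pderiv k f)
    + ∑ i, lamX n s t i * liftX n s t (pderiv k (g i))
    - ∑ j, nuX n s t j * liftX n s t (pderiv k (h j))

/-- The KKT ideal `I_KKT = ⟨F_1,…,F_n, g_1,…,g_s, ν_1h_1,…,ν_th_t⟩ ⊆ ℝ[x,λ,ν]`. -/
def IKKT (n s t : ℕ) (f : MvPolynomial (Fin n) ℝ) (g : Fin s → MvPolynomial (Fin n) ℝ)
    (h : Fin t → MvPolynomial (Fin n) ℝ) : Ideal (KPoly n s t) :=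
  Ideal.span (Set.range (FF n s t f g h) ∪ Set.range (fun i => liftX n s t (g i))
    ∪ Set.range (fun j => nuX n s t j * liftX n s t (h j)))

/-- The real variety `V^ℝ_KKT` of the KKT ideal. -/
def VRKKT (n s t : ℕ) (f : MvPolynomial (Fin n) ℝ) (g : Fin s → MvPolynomial (Fin n) ℝ)
    (h : Fin t → MvPolynomial (Fin n) ℝ) : Set (KVar n s t → ℝ) :=
  {z | ∀ p ∈ IKKT n s t f g h, eval z p = 0}

/-- The set `H = {(x,λ,ν) : h_j(x) ≥ 0 for all j}`. -/
def HSet (n s t : ℕ) (h : Fin t → MvPolynomial (Fin n) ℝ) : Set (KVar n s t → ℝ) :=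
  {z | ∀ j, 0 ≤ eval z (liftX n s t (h j))}

/-- A real polynomial is SOS if it is a finite sum of squares of real polynomials. -/
def IsSOS {σ : Type*} (p : MvPolynomial σ ℝ) : Prop :=
  ∃ (m : ℕ) (q : Fin m → MvPolynomial σ ℝ), p = ∑ i, (q i) ^ 2

/-- The linear cone `M_KKT = {σ_0 + Σ_j σ_j h_j : σ_i SOS} + I_KKT`. -/
def MKKT (n s t : ℕ) (f : MvPolynomial (Fin n) ℝ) (g : Fin s → MvPolynomial (Fin n) ℝ)
    (h : Fin t → MvPolynomial (Fin n) ℝ) : Set (KPoly n s t) :=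
  {p | ∃ (σ0 : KPoly n s t) (σ : Fin t → KPoly n s t),
    IsSOS σ0 ∧ (∀ j, IsSOS (σ j)) ∧
    ∃ q ∈ IKKT n s t f g h,
      p = σ0 + (∑ j, σ j * liftX n s t (h j)) + q}

open scoped ComplexOrder

-- A well-order on `X` singles out one point of each pair `{x, star x}`; the root chosen there
-- is transported to the partner by conjugation.
theorem Complex.exists_sq_eq_of_star_comm {X : Type*} [InvolutiveStar X] (w : X → ℂ)
    (hw : ∀ x, w (star x) = star (w x)) (hfix : ∀ x, star x = x → 0 ≤ w x) :
    ∃ c : X → ℂ, (∀ x, c (star x) = star (c x)) ∧ ∀ x, c x ^ 2 = w x := by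
  classical
  let r : X → X → Prop := WellOrderingRel
  let sqrt (a : ℂ) : ℂ := a ^ (2⁻¹ : ℂ)
  have sqrt_sq (a : ℂ) : sqrt a ^ 2 = a := Complex.cpow_ofNat_inv_pow a 2
  have star_sqrt (a : ℂ) (ha : 0 ≤ a) : star (sqrt a) = sqrt a := by
    obtain ⟨b, hb, rfl⟩ := RCLike.nonneg_iff_exists_ofReal.mp ha
    have two_inv : (2⁻¹ : ℂ) = ((2⁻¹ : ℝ) : ℂ) := by push_cast; rfl
    show star ((b : ℂ) ^ (2⁻¹ : ℂ)) = (b : ℂ) ^ (2⁻¹ : ℂ)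
    rw [two_inv, ← Complex.ofReal_cpow hb, Complex.star_def, Complex.conj_ofReal]
  refine ⟨fun x => if r (star x) x then star (sqrt (w (star x))) else sqrt (w x),
    fun x => ?_, fun x => ?_⟩
  · rcases trichotomous_of r (star x) x with hlt | heq | hgt
    · have : ¬ r x (star x) := asymm hlt
      simp only [star_star, if_pos hlt, if_neg this]
    · have : ¬ r x x := irrefl x
      simp only [heq, if_neg this, star_sqrt _ (hfix x heq)]
    · have : ¬ r (star x) x := asymm hgt
      simp only [star_star, if_pos hgt, if_neg this]
  · dsimp only
    split_ifs
    · rw [← star_pow, sqrt_sq, hw, star_star]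
    · exact sqrt_sq _

theorem Complex.ofReal_re_of_star_eq {σ : Type*} {z : σ → ℂ} (hz : star z = z) :
    (fun k => ((z k).re : ℂ)) = z := by
  funext k
  exact Complex.conj_eq_iff_re.mp (congrFun hz k)

namespace MvPolynomial

variable {σ : Type*}

section Interpolation

variable {K : Type*} [Field K]

theorem exists_eval_eq_one_and_eq_zero (S : Finset (σ → K)) (u : σ → K) :
    ∃ e : MvPolynomial σ K, eval u e = 1 ∧ ∀ w ∈ S, w ≠ u → eval w e = 0 := by
  classical
  have separate : ∀ w, ∃ e : MvPolynomial σ K, eval u e = 1 ∧ (w ≠ u → eval w e = 0) := by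
    intro w
    by_cases hw : w = u
    · exact ⟨1, map_one _, fun h => (h hw).elim⟩
    obtain ⟨k, hk⟩ := Function.ne_iff.mp hw
    refine ⟨C (u k - w k)⁻¹ * (X k - C (w k)), ?_, fun _ => by simp⟩
    simp [inv_mul_cancel₀ (sub_ne_zero.mpr hk.symm)]
  choose e he_one he_zero using separate
  refine ⟨∏ w ∈ S.erase u, e w, by simp [he_one], fun w hw hwu => ?_⟩
  rw [map_prod]
  exact Finset.prod_eq_zero (Finset.mem_erase.mpr ⟨hwu, hw⟩) (he_zero w hwu)

theorem exists_eval_eq_on_finite {S : Set (σ → K)} (hS : S.Finite) (v : (σ → K) → K) :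
    ∃ P : MvPolynomial σ K, ∀ z ∈ S, eval z P = v z := by
  classical
  choose e he_one he_zero using exists_eval_eq_one_and_eq_zero (K := K) hS.toFinset
  refine ⟨∑ u ∈ hS.toFinset, C (v u) * e u, fun z hz => ?_⟩
  rw [map_sum, Finset.sum_eq_single z]
  · simp [he_one]
  · intro u hu hne
    simp [he_zero u z (hS.mem_toFinset.mpr hz) hne.symm]
  · exact fun h => (h (hS.mem_toFinset.mpr hz)).elim

end Interpolation

theorem aeval_star (z : σ → ℂ) (p : MvPolynomial σ ℝ) : aeval (star z) p = star (aeval z p) :=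
  (comp_aeval_apply (f := z) Complex.conjAe.toAlgHom p).symm

theorem eval_map_star (z : σ → ℂ) (P : MvPolynomial σ ℂ) :
    eval z (map (starRingEnd ℂ) P) = star (eval (star z) P) := by
  rw [eval_map]
  change eval₂ (starRingEnd ℂ) z P = starRingEnd ℂ (eval₂ (RingHom.id ℂ) (star z) P)
  rw [eval₂_comp_left]
  congr
  funext k
  simp

theorem aeval_ofReal (x : σ → ℝ) (p : MvPolynomial σ ℝ) :
    aeval (fun k => (x k : ℂ)) p = eval x p := by
  rw [← coe_aeval_eq_eval]
  exact (comp_aeval_apply (f := x) Complex.ofRealAm p).symm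

theorem aeval_eq_ofReal_eval_re {z : σ → ℂ} (hz : star z = z) (p : MvPolynomial σ ℝ) :
    aeval z p = eval (fun k => (z k).re) p := by
  rw [← aeval_ofReal, Complex.ofReal_re_of_star_eq hz]

theorem exists_aeval_eq_of_star {S : Set (σ → ℂ)} (hS : S.Finite) (v : (σ → ℂ) → ℂ)
    (hv : ∀ z ∈ S, v (star z) = star (v z)) :
    ∃ p : MvPolynomial σ ℝ, ∀ z ∈ S, aeval z p = v z := by
  obtain ⟨P, hP⟩ := exists_eval_eq_on_finite (hS.union (hS.image star)) v
  obtain ⟨p, hp⟩ : P + map (starRingEnd ℂ) P ∈ Set.range (map (algebraMap ℝ ℂ)) := by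
    refine mem_range_map_iff_coeffs_subset.mpr fun c hc => ?_
    obtain ⟨m, -, rfl⟩ := mem_coeffs_iff.mp hc
    refine ⟨(coeff m (P + map (starRingEnd ℂ) P)).re, Complex.conj_eq_iff_re.mp ?_⟩
    simp [coeff_map, add_comm]
  refine ⟨C 2⁻¹ * p, fun z hz => ?_⟩
  have hvz : eval (star z) P = star (v z) := by
    rw [hP _ (Or.inr ⟨z, hz, rfl⟩), hv z hz]
  have hp_z : aeval z p = 2 * v z := by
    rw [aeval_def, ← eval_map, hp, map_add, eval_map_star, hvz, star_star, hP z (Or.inl hz)]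
    ring
  rw [map_mul, hp_z, aeval_C]
  simp

theorem exists_sq_aeval_eq {S : Set (σ → ℂ)} (hS : S.Finite) (w : (σ → ℂ) → ℂ)
    (hw : ∀ z, w (star z) = star (w z)) (hfix : ∀ z, star z = z → 0 ≤ w z) :
    ∃ q : MvPolynomial σ ℝ, ∀ z ∈ S, aeval z (q ^ 2) = w z := by
  obtain ⟨c, hc_star, hc_sq⟩ := Complex.exists_sq_eq_of_star_comm w hw hfix
  obtain ⟨q, hq⟩ := exists_aeval_eq_of_star hS c fun z _ => hc_star z
  exact ⟨q, fun z hz => by rw [map_pow, hq z hz, hc_sq]⟩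

end MvPolynomial

theorem isSOS_sq {σ : Type*} (q : MvPolynomial σ ℝ) : IsSOS (q ^ 2) :=
  ⟨1, fun _ => q, by simp⟩

theorem sum_mul_min_zero_div_mul_eq {α ι : Type*} [Field α] [LinearOrder α]
    [IsStrictOrderedRing α] [Fintype ι] (a : α) {b : ι → α} (hb : ∃ i, b i < 0) :
    ∑ i, a * min (b i) 0 / (∑ k, min (b k) 0 ^ 2) * b i = a := by
  have min_mul_self (c : α) : min c 0 * c = min c 0 ^ 2 := by
    rcases le_total c 0 with hc | hc <;> simp [hc, sq]
  obtain ⟨i, hi⟩ := hb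
  have hD : 0 < ∑ k, min (b k) 0 ^ 2 :=
    Finset.sum_pos' (fun k _ => sq_nonneg _)
      ⟨i, Finset.mem_univ _, sq_pos_of_neg (min_lt_of_left_lt hi)⟩
  calc ∑ i, a * min (b i) 0 / (∑ k, min (b k) 0 ^ 2) * b i
      = a / (∑ k, min (b k) 0 ^ 2) * ∑ i, min (b i) 0 ^ 2 := by
        rw [Finset.mul_sum]
        refine Finset.sum_congr rfl fun i _ => ?_
        rw [← min_mul_self]
        ring
    _ = a := div_mul_cancel₀ _ hD.ne'

theorem pred_star_iff_of_star_eq {X : Type*} [InvolutiveStar X] {P : X → Prop}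
    (hP : ∀ x, P x → star x = x) (x : X) : P (star x) ↔ P x := by
  refine ⟨fun h => ?_, fun h => by rwa [hP x h]⟩
  have hfix := hP _ h
  rw [star_star] at hfix
  rwa [← hfix] at h

theorem exists_sq_aeval_eq_ite_of_real {σ : Type*} {S : Set (σ → ℂ)} (hS : S.Finite)
    (P : (σ → ℂ) → Prop) [DecidablePred P] (hP : ∀ z, P z → star z = z)
    (u : (σ → ℂ) → ℝ) (hu : ∀ z, P z → 0 ≤ u z) :
    ∃ q : MvPolynomial σ ℝ, ∀ z ∈ S, aeval z (q ^ 2) = if P z then (u z : ℂ) else 0 := by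
  refine exists_sq_aeval_eq hS _ (fun z => ?_) (fun z _ => ?_)
  · by_cases hz : P z
    · rw [if_pos ((pred_star_iff_of_star_eq hP z).mpr hz), if_pos hz, hP z hz,
        Complex.star_def, Complex.conj_ofReal]
    · rw [if_neg (mt (pred_star_iff_of_star_eq hP z).mp hz), if_neg hz, star_zero]
  · split_ifs with hz
    · exact Complex.zero_le_real.mpr (hu z hz)
    · exact le_rfl

open Classical in
theorem exists_sq_aeval_eq_ite_neg {σ : Type*} {S : Set (σ → ℂ)} (hS : S.Finite)
    (f : MvPolynomial σ ℝ) :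
    ∃ q : MvPolynomial σ ℝ, ∀ z ∈ S, aeval z (q ^ 2) =
      if star z = z ∧ eval (fun k => (z k).re) f < 0 then 0 else aeval z f := by
  have h_iff := pred_star_iff_of_star_eq
    (P := fun z : σ → ℂ => star z = z ∧ eval (fun k => (z k).re) f < 0) fun _ hz => hz.1
  refine exists_sq_aeval_eq hS _ (fun z => ?_) (fun z hfix => ?_)
  · by_cases hz : star z = z ∧ eval (fun k => (z k).re) f < 0
    · rw [if_pos ((h_iff z).mpr hz), if_pos hz, star_zero]
    · rw [if_neg (mt (h_iff z).mp hz), if_neg hz, aeval_star]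
  · split_ifs with hneg
    · exact le_rfl
    · rw [aeval_eq_ofReal_eval_re hfix]
      exact Complex.zero_le_real.mpr (not_lt.mp fun h' => hneg ⟨hfix, h'⟩)

theorem exists_sq_combination_eq_on_finite {σ ι : Type*} [Fintype ι] {V : Set (σ → ℂ)}
    (hV : V.Finite) (f : MvPolynomial σ ℝ) (h : ι → MvPolynomial σ ℝ)
    (hpos : ∀ x : σ → ℝ, (fun k => (x k : ℂ)) ∈ V → (∀ i, 0 ≤ eval x (h i)) → 0 ≤ eval x f) :
    ∃ (q₀ : MvPolynomial σ ℝ) (q : ι → MvPolynomial σ ℝ), ∀ z ∈ V,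
      aeval z f = aeval z (q₀ ^ 2) + ∑ i, aeval z (q i ^ 2) * aeval z (h i) := by
  classical
  let re (z : σ → ℂ) : σ → ℝ := fun k => (z k).re
  obtain ⟨q₀, hq₀⟩ := exists_sq_aeval_eq_ite_neg hV f
  choose q hq using fun i => exists_sq_aeval_eq_ite_of_real hV
    (fun z => star z = z ∧ eval (re z) f < 0) (fun _ hz => hz.1)
    (fun z => eval (re z) f * min (eval (re z) (h i)) 0 / ∑ k, min (eval (re z) (h k)) 0 ^ 2)
    (fun _ hz => div_nonneg (mul_nonneg_of_nonpos_of_nonpos hz.2.le (min_le_right _ _))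
      (Finset.sum_nonneg fun _ _ => sq_nonneg _))
  refine ⟨q₀, q, fun z hz => ?_⟩
  simp only [hq₀ z hz, hq _ z hz]
  split_ifs with hneg
  · obtain ⟨hreal, hneg⟩ := hneg
    obtain ⟨i, hi⟩ : ∃ i, eval (re z) (h i) < 0 := by
      by_contra! hall
      refine hneg.not_ge (hpos (re z) ?_ hall)
      rwa [Complex.ofReal_re_of_star_eq hreal]
    simp only [aeval_eq_ofReal_eval_re hreal, zero_add]
    exact_mod_cast (sum_mul_min_zero_div_mul_eq _ ⟨i, hi⟩).symm
  · simp

theorem exists_isSOS_sub_mem_of_finite_zeroLocus {σ ι : Type*} [Finite σ] [Fintype ι]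
    (I : Ideal (MvPolynomial σ ℝ)) (hfin : (zeroLocus ℂ I).Finite) (hrad : I.radical = I)
    (f : MvPolynomial σ ℝ) (h : ι → MvPolynomial σ ℝ)
    (hpos : ∀ x : σ → ℝ, (∀ p ∈ I, eval x p = 0) → (∀ i, 0 ≤ eval x (h i)) → 0 ≤ eval x f) :
    ∃ (s₀ : MvPolynomial σ ℝ) (s : ι → MvPolynomial σ ℝ),
      IsSOS s₀ ∧ (∀ i, IsSOS (s i)) ∧ f - (s₀ + ∑ i, s i * h i) ∈ I := by
  obtain ⟨q₀, q, hq⟩ := exists_sq_combination_eq_on_finite hfin f h fun x hx =>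
    hpos x fun p hp => by simpa [aeval_ofReal] using hx p hp
  refine ⟨q₀ ^ 2, fun i => q i ^ 2, isSOS_sq _, fun i => isSOS_sq _, ?_⟩
  rw [← hrad, ← vanishingIdeal_zeroLocus_eq_radical (K := ℂ), mem_vanishingIdeal_iff]
  intro z hz
  simp [hq z hz]

/-- If the complex variety `V_KKT` is finite and `I_KKT` is radical, and
`f` is nonnegative on `V^ℝ_KKT ∩ H`, then `f ∈ M_KKT`. -/
theorem stmt1 (n s t : ℕ) (f : MvPolynomial (Fin n) ℝ) (g : Fin s → MvPolynomial (Fin n) ℝ)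
    (h : Fin t → MvPolynomial (Fin n) ℝ)
    (hfin : {z : KVar n s t → ℂ | ∀ p ∈ IKKT n s t f g h, aeval z p = 0}.Finite)
    (hrad : (IKKT n s t f g h).radical = IKKT n s t f g h)
    (hnonneg : ∀ z ∈ VRKKT n s t f g h ∩ HSet n s t h, 0 ≤ eval z (liftX n s t f)) :
    liftX n s t f ∈ MKKT n s t f g h := by
  obtain ⟨σ₀, σ, hσ₀, hσ, hmem⟩ := exists_isSOS_sub_mem_of_finite_zeroLocus (IKKT n s t f g h)
    hfin hrad (liftX n s t f) (fun j => liftX n s t (h j)) fun z hz hh => hnonneg z ⟨hz, hh⟩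
  exact ⟨σ₀, σ, hσ₀, hσ, _, hmem, by ring⟩

end
end

section
/- Suppose f attains its global minimum f* over the feasible set F at a point x* admitting multipliers with (x*, λ*, ν*) ∈ V^ℝ_KKT ∩ H, and suppose the linear cone M_KKT is archimedean, i.e., there is R ∈ ℕ with R − (Σ_{k=1}^n x_k² + Σ_{i=1}^s λ_i² + Σ_{j=1}^t ν_j²) ∈ M_KKT. Then for every ε > 0 one has f − (f* − ε) ∈ M_KKT; consequently sup{γ ∈ ℝ : f − γ ∈ M_KKT} = f* and the lower bounds f*_N of the linear-cone SOS relaxations converge to f*. -/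
open MvPolynomial Filter

noncomputable section

/-- The feasible set `F = {x : g_i(x) = 0, h_j(x) ≥ 0}`. -/
def Feas (n s t : ℕ) (g : Fin s → MvPolynomial (Fin n) ℝ)
    (h : Fin t → MvPolynomial (Fin n) ℝ) : Set (Fin n → ℝ) :=
  {x | (∀ i, eval x (g i) = 0) ∧ (∀ j, 0 ≤ eval x (h j))}

/-- The truncated KKT ideal `I_{N,KKT}`: combinations `Σ φ_k F_k + Σ φ_i g_i + Σ ψ_j ν_j h_j`
in which all products have degree at most `N`. -/
def ITrunc (n s t : ℕ) (f : MvPolynomial (Fin n) ℝ) (g : Fin s → MvPolynomial (Fin n) ℝ)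
    (h : Fin t → MvPolynomial (Fin n) ℝ) (N : ℕ) : Set (KPoly n s t) :=
  {p | ∃ (φ : Fin n → KPoly n s t) (ψ : Fin s → KPoly n s t) (χ : Fin t → KPoly n s t),
    (∀ k, (φ k * FF n s t f g h k).totalDegree ≤ N) ∧
    (∀ i, (ψ i * liftX n s t (g i)).totalDegree ≤ N) ∧
    (∀ j, (χ j * (nuX n s t j * liftX n s t (h j))).totalDegree ≤ N) ∧
    p = (∑ k, φ k * FF n s t f g h k) + (∑ i, ψ i * liftX n s t (g i))
      + (∑ j, χ j * (nuX n s t j * liftX n s t (h j)))}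

/-- The truncated linear cone `M_{N,KKT}`. -/
def MTrunc (n s t : ℕ) (f : MvPolynomial (Fin n) ℝ) (g : Fin s → MvPolynomial (Fin n) ℝ)
    (h : Fin t → MvPolynomial (Fin n) ℝ) (N : ℕ) : Set (KPoly n s t) :=
  {p | ∃ (σ0 : KPoly n s t) (σ : Fin t → KPoly n s t),
    IsSOS σ0 ∧ (∀ j, IsSOS (σ j)) ∧
    σ0.totalDegree ≤ N ∧ (∀ j, (σ j * liftX n s t (h j)).totalDegree ≤ N) ∧
    ∃ q ∈ ITrunc n s t f g h N,
      p = σ0 + (∑ j, σ j * liftX n s t (h j)) + q}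

namespace Stmt8Aux

variable {n s t : ℕ}

lemma isSOS_zero : IsSOS (0 : KPoly n s t) := ⟨0, fun i => 0, by simp⟩

lemma isSOS_sq (q : KPoly n s t) : IsSOS (q ^ 2) := ⟨1, fun _ => q, by simp⟩

lemma isSOS_one : IsSOS (1 : KPoly n s t) := by
  simpa using isSOS_sq (1 : KPoly n s t)

lemma isSOS_add {p q : KPoly n s t} (hp : IsSOS p) (hq : IsSOS q) : IsSOS (p + q) := by
  obtain ⟨m1, u, hu⟩ := hp
  obtain ⟨m2, v, hv⟩ := hq
  refine ⟨m1 + m2, Fin.append u v, ?_⟩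
  rw [hu, hv]
  rw [Fin.sum_univ_add]
  simp [Fin.append_left, Fin.append_right]

lemma isSOS_mul {p q : KPoly n s t} (hp : IsSOS p) (hq : IsSOS q) : IsSOS (p * q) := by
  obtain ⟨m1, u, hu⟩ := hp
  obtain ⟨m2, v, hv⟩ := hq
  refine ⟨m1 * m2, fun k => u (finProdFinEquiv.symm k).1 * v (finProdFinEquiv.symm k).2, ?_⟩
  have h1 : ∑ k : Fin (m1 * m2),
      (u (finProdFinEquiv.symm k).1 * v (finProdFinEquiv.symm k).2) ^ 2
      = ∑ ij : Fin m1 × Fin m2, (u ij.1 * v ij.2) ^ 2 :=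
    Equiv.sum_comp (finProdFinEquiv.symm) (fun ij => (u ij.1 * v ij.2) ^ 2)
  rw [hu, hv, Fintype.sum_mul_sum, h1, Fintype.sum_prod_type]
  simp [mul_pow]

lemma isSOS_C {r : ℝ} (hr : 0 ≤ r) : IsSOS (C r : KPoly n s t) := by
  refine ⟨1, fun _ => C (Real.sqrt r), ?_⟩
  simp [← map_pow, Real.sq_sqrt hr]

lemma isSOS_finsetSum {ι : Type*} (S : Finset ι) (e : ι → KPoly n s t) :
    IsSOS (∑ i ∈ S, (e i) ^ 2) := by
  classical
  induction S using Finset.cons_induction with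
  | empty => simpa using isSOS_zero
  | cons a S ha ih =>
    rw [Finset.sum_cons]
    exact isSOS_add (isSOS_sq (e a)) ih

structure IsQM (S : Set (KPoly n s t)) : Prop where
  add_mem : ∀ {a b : KPoly n s t}, a ∈ S → b ∈ S → a + b ∈ S
  sos_mul_mem : ∀ {σ a : KPoly n s t}, IsSOS σ → a ∈ S → σ * a ∈ S
  one_mem : (1 : KPoly n s t) ∈ S

namespace IsQM

variable {S : Set (KPoly n s t)}

lemma sos_mem (hS : IsQM S) {σ : KPoly n s t} (hσ : IsSOS σ) : σ ∈ S := by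
  simpa using hS.sos_mul_mem hσ hS.one_mem

lemma zero_mem (hS : IsQM S) : (0 : KPoly n s t) ∈ S := by
  simpa using hS.sos_mul_mem isSOS_zero hS.one_mem

lemma const_mem (hS : IsQM S) {r : ℝ} (hr : 0 ≤ r) : (C r : KPoly n s t) ∈ S :=
  hS.sos_mem (isSOS_C hr)

lemma smul_mem (hS : IsQM S) {c : ℝ} (hc : 0 ≤ c) {a : KPoly n s t} (ha : a ∈ S) : C c * a ∈ S :=
  hS.sos_mul_mem (isSOS_C hc) ha

lemma sq_mul_mem (hS : IsQM S) (q : KPoly n s t) {a : KPoly n s t} (ha : a ∈ S) : q ^ 2 * a ∈ S :=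
  hS.sos_mul_mem (isSOS_sq q) ha

lemma neg_one_mem_of_const (hS : IsQM S) {e : ℝ} (he : e < 0) (hmem : (C e : KPoly n s t) ∈ S) :
    (-1 : KPoly n s t) ∈ S := by
  have hnn : (0:ℝ) ≤ -1 / e := by
    rw [div_nonneg_iff]; right; constructor <;> linarith
  have h := hS.smul_mem (c := -1 / e) hnn hmem
  have : (C (-1/e) : KPoly n s t) * C e = -1 := by
    rw [← map_mul, div_mul_cancel₀ _ he.ne]
    simp
  rwa [this] at h

/-- If `a, b ∈ S` and `a + b` is a positive constant, then `a * b ∈ S`. -/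
lemma mul_mem_of_add_const (hS : IsQM S) {a b : KPoly n s t} {d : ℝ} (hd : 0 < d)
    (ha : a ∈ S) (hb : b ∈ S) (hab : a + b = C d) : a * b ∈ S := by
  have h1 : a ^ 2 * b ∈ S := hS.sq_mul_mem a hb
  have h2 : b ^ 2 * a ∈ S := hS.sq_mul_mem b ha
  have key : a ^ 2 * b + b ^ 2 * a = C d * (a * b) := by rw [← hab]; ring
  have h3 := hS.smul_mem (c := 1 / d) (by positivity) (hS.add_mem h1 h2)
  rw [key, ← mul_assoc, ← map_mul] at h3
  rw [show (1/d) * d = 1 by field_simp] at h3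
  simpa using h3

end IsQM

section Bdd

variable {n s t : ℕ}

/-- Boundedness of a cone: every element is bounded above and below by constants. -/
def IsBdd (S : Set (KPoly n s t)) : Prop :=
  ∀ a : KPoly n s t, ∃ N : ℝ, 0 < N ∧ C N - a ∈ S ∧ C N + a ∈ S

lemma C_half_two : (C (1/2 : ℝ) : KPoly n s t) * 2 = 1 := by
  rw [show (2 : KPoly n s t) = C 2 by simp [map_ofNat], ← map_mul]
  norm_num

lemma isBdd_of_var {S : Set (KPoly n s t)} (hS : IsQM S)
    (hvar : ∀ v : KVar n s t, ∃ N : ℝ, 0 < N ∧ C N - X v ∈ S ∧ C N + X v ∈ S) :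
    IsBdd S := by
  have bddC : ∀ r : ℝ, ∃ N : ℝ, 0 < N ∧ C N - C r ∈ S ∧ C N + C r ∈ S := by
    intro r
    refine ⟨|r| + 1, by positivity, ?_, ?_⟩
    · rw [← map_sub]
      exact hS.const_mem (by have := le_abs_self r; linarith)
    · rw [← map_add]
      exact hS.const_mem (by have := neg_abs_le r; linarith)
  have bddAdd : ∀ a b : KPoly n s t,
      (∃ N : ℝ, 0 < N ∧ C N - a ∈ S ∧ C N + a ∈ S) →
      (∃ N : ℝ, 0 < N ∧ C N - b ∈ S ∧ C N + b ∈ S) →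
      (∃ N : ℝ, 0 < N ∧ C N - (a + b) ∈ S ∧ C N + (a + b) ∈ S) := by
    rintro a b ⟨N1, hN1, h1m, h1p⟩ ⟨N2, hN2, h2m, h2p⟩
    refine ⟨N1 + N2, by positivity, ?_, ?_⟩
    · have := hS.add_mem h1m h2m
      rwa [show (C N1 - a) + (C N2 - b) = C (N1 + N2) - (a+b) by rw [map_add]; ring] at this
    · have := hS.add_mem h1p h2p
      rwa [show (C N1 + a) + (C N2 + b) = C (N1 + N2) + (a+b) by rw [map_add]; ring] at this
  have bddSqUp : ∀ (a : KPoly n s t) (N : ℝ), 0 < N → C N - a ∈ S → C N + a ∈ S →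
      C (N^2) - a^2 ∈ S := by
    intro a N hN hm hp
    have h3 : (C N + a)^2 * (C N - a) ∈ S := hS.sq_mul_mem _ hm
    have h4 : (C N - a)^2 * (C N + a) ∈ S := hS.sq_mul_mem _ hp
    have h5 := hS.smul_mem (c := 1/(2*N)) (by positivity) (hS.add_mem h3 h4)
    have h2N : (C (1/(2*N)) : KPoly n s t) * C (2*N) = 1 := by
      rw [← map_mul, one_div, inv_mul_cancel₀ (by positivity : (2*N : ℝ) ≠ 0)]
      simp
    have expand : ((C N + a)^2 * (C N - a) + (C N - a)^2 * (C N + a))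
        = C (2*N) * (C (N^2) - a^2) := by
      rw [show (C (2*N) : KPoly n s t) = 2 * C N by rw [map_mul]; simp [map_ofNat],
        map_pow]
      ring
    rw [expand, ← mul_assoc, h2N, one_mul] at h5
    exact h5
  have bddMul : ∀ a b : KPoly n s t,
      (∃ N : ℝ, 0 < N ∧ C N - a ∈ S ∧ C N + a ∈ S) →
      (∃ N : ℝ, 0 < N ∧ C N - b ∈ S ∧ C N + b ∈ S) →
      (∃ N : ℝ, 0 < N ∧ C N - (a * b) ∈ S ∧ C N + (a * b) ∈ S) := by
    intro a b ha hb
    have hbneg : ∃ N : ℝ, 0 < N ∧ C N - (-b) ∈ S ∧ C N + (-b) ∈ S := by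
      obtain ⟨N, hN, h1, h2⟩ := hb
      exact ⟨N, hN, by rwa [sub_neg_eq_add], by rwa [← sub_eq_add_neg]⟩
    obtain ⟨N1, hN1, h1m, h1p⟩ := bddAdd a b ha hb
    obtain ⟨N2, hN2, h2m, h2p⟩ := bddAdd a (-b) ha hbneg
    have hsq1 : C (N1^2) - (a+b)^2 ∈ S := bddSqUp _ _ hN1 h1m h1p
    have hsq2 : C (N2^2) - (a + -b)^2 ∈ S := bddSqUp _ _ hN2 h2m h2p
    have h4 : (C (1/4 : ℝ) : KPoly n s t) * 4 = 1 := by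
      rw [show (4 : KPoly n s t) = C 4 by simp [map_ofNat], ← map_mul]
      norm_num
    refine ⟨(N1^2 + N2^2)/4, by positivity, ?_, ?_⟩
    · have hmem := hS.smul_mem (c := 1/4) (by norm_num)
        (hS.add_mem hsq1 (hS.add_mem (hS.sos_mem (isSOS_sq (a + -b))) (hS.const_mem (le_of_lt (by positivity : (0:ℝ) < N2^2)))))
      have e : (C ((N1^2 + N2^2)/4) : KPoly n s t) = C (1/4) * (C (N1^2) + C (N2^2)) := by
        rw [← map_add, ← map_mul]; congr 1; ring
      have key : C (1/4 : ℝ) * ((C (N1^2) - (a+b)^2) + ((a + -b)^2 + C (N2^2)))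
          = C ((N1^2 + N2^2)/4) - a * b := by
        rw [e]; linear_combination (-(a * b)) * h4
      rwa [key] at hmem
    · have hmem := hS.smul_mem (c := 1/4) (by norm_num)
        (hS.add_mem hsq2 (hS.add_mem (hS.sos_mem (isSOS_sq (a + b))) (hS.const_mem (le_of_lt (by positivity : (0:ℝ) < N1^2)))))
      have e : (C ((N1^2 + N2^2)/4) : KPoly n s t) = C (1/4) * (C (N1^2) + C (N2^2)) := by
        rw [← map_add, ← map_mul]; congr 1; ring
      have key : C (1/4 : ℝ) * ((C (N2^2) - (a + -b)^2) + ((a + b)^2 + C (N1^2)))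
          = C ((N1^2 + N2^2)/4) + a * b := by
        rw [e]; linear_combination (a * b) * h4
      rwa [key] at hmem
  intro a
  induction a using MvPolynomial.induction_on with
  | C r => exact bddC r
  | add p q hp hq => exact bddAdd p q hp hq
  | mul_X p v hp =>
    refine bddMul p (X v) hp ?_
    obtain ⟨N, hN, h1, h2⟩ := hvar v
    exact ⟨N, hN, h1, h2⟩

end Bdd


section MKKTlemmas

variable {n s t : ℕ} (f : MvPolynomial (Fin n) ℝ) (g : Fin s → MvPolynomial (Fin n) ℝ)
  (h : Fin t → MvPolynomial (Fin n) ℝ)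

lemma isQM_MKKT : IsQM (MKKT n s t f g h) := by
  constructor
  · rintro a b ⟨σ0, σ, hσ0, hσ, q, hq, rfl⟩ ⟨σ0', σ', hσ0', hσ', q', hq', rfl⟩
    refine ⟨σ0 + σ0', fun j => σ j + σ' j, isSOS_add hσ0 hσ0',
      fun j => isSOS_add (hσ j) (hσ' j), q + q', Ideal.add_mem _ hq hq', ?_⟩
    rw [Finset.sum_congr rfl (fun j _ => add_mul (σ j) (σ' j) (liftX n s t (h j))),
      Finset.sum_add_distrib]
    ring
  · rintro τ a hτ ⟨σ0, σ, hσ0, hσ, q, hq, rfl⟩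
    refine ⟨τ * σ0, fun j => τ * σ j, isSOS_mul hτ hσ0,
      fun j => isSOS_mul hτ (hσ j), τ * q, Ideal.mul_mem_left _ _ hq, ?_⟩
    simp only [mul_add, Finset.mul_sum, mul_assoc]
  · exact ⟨1, fun _ => 0, isSOS_one, fun _ => isSOS_zero, 0, Ideal.zero_mem _, by simp⟩

lemma mem_MKKT_of_ideal {q : KPoly n s t} (hq : q ∈ IKKT n s t f g h) :
    q ∈ MKKT n s t f g h :=
  ⟨0, fun _ => 0, isSOS_zero, fun _ => isSOS_zero, q, hq, by simp⟩

lemma lifth_mem_MKKT (j : Fin t) : liftX n s t (h j) ∈ MKKT n s t f g h := by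
  classical
  refine ⟨0, fun j' => if j' = j then 1 else 0, isSOS_zero, ?_, 0, Ideal.zero_mem _, ?_⟩
  · intro j'
    by_cases hj : j' = j <;> simp [hj, isSOS_one, isSOS_zero]
  · simp [ite_mul, Finset.sum_ite_eq']

lemma isBdd_MKKT
    (harch : ∃ R : ℕ, (C (R : ℝ) : KPoly n s t)
      - ((∑ k, (X (Sum.inl k) : KPoly n s t) ^ 2) + (∑ i, lamX n s t i ^ 2)
        + (∑ j, nuX n s t j ^ 2)) ∈ MKKT n s t f g h) :
    IsBdd (MKKT n s t f g h) := by
  classical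
  obtain ⟨R, hR⟩ := harch
  have hQM := isQM_MKKT f g h
  apply isBdd_of_var hQM
  have hsum : (∑ v : KVar n s t, (X v : KPoly n s t) ^ 2)
      = (∑ k, (X (Sum.inl k) : KPoly n s t) ^ 2) + ((∑ i, lamX n s t i ^ 2)
        + (∑ j, nuX n s t j ^ 2)) := by
    rw [Fintype.sum_sum_type, Fintype.sum_sum_type]
    rfl
  have hR' : C (R : ℝ) - (∑ v : KVar n s t, (X v : KPoly n s t) ^ 2) ∈ MKKT n s t f g h := by
    rw [hsum, ← add_assoc]
    exact hR
  have hsq : ∀ v : KVar n s t, C (R : ℝ) - (X v : KPoly n s t) ^ 2 ∈ MKKT n s t f g h := by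
    intro v
    have hsplit : (∑ v : KVar n s t, (X v : KPoly n s t) ^ 2)
        = (X v : KPoly n s t) ^ 2 + ∑ u ∈ Finset.univ.erase v, (X u : KPoly n s t) ^ 2 :=
      (Finset.add_sum_erase _ _ (Finset.mem_univ v)).symm
    have hrest : (∑ u ∈ Finset.univ.erase v, (X u : KPoly n s t) ^ 2) ∈ MKKT n s t f g h :=
      hQM.sos_mem (isSOS_finsetSum _ _)
    have := hQM.add_mem hR' hrest
    rw [hsplit] at this
    rwa [show C (R:ℝ) - ((X v : KPoly n s t) ^ 2 + ∑ u ∈ Finset.univ.erase v, (X u : KPoly n s t) ^ 2)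
        + ∑ u ∈ Finset.univ.erase v, (X u : KPoly n s t) ^ 2
        = C (R:ℝ) - (X v : KPoly n s t) ^ 2 by ring] at this
  intro v
  have h2 : (C (1/2 : ℝ) : KPoly n s t) * 2 = 1 := C_half_two
  have e : (C (((R:ℝ)+1)/2) : KPoly n s t) = C (1/2) * (C (R:ℝ) + 1) := by
    rw [← map_one (C : ℝ →+* KPoly n s t), ← map_add, ← map_mul]
    congr 1
    ring
  refine ⟨((R:ℝ)+1)/2, by positivity, ?_, ?_⟩
  · have hmem := hQM.smul_mem (c := 1/2) (by norm_num)
      (hQM.add_mem (hQM.sos_mem (isSOS_sq (1 - X v))) (hsq v))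
    have key : C (1/2:ℝ) * ((1 - X v : KPoly n s t)^2 + (C (R:ℝ) - (X v)^2))
        = C (((R:ℝ)+1)/2) - X v := by
      rw [e]; linear_combination (-(X v : KPoly n s t)) * h2
    rwa [key] at hmem
  · have hmem := hQM.smul_mem (c := 1/2) (by norm_num)
      (hQM.add_mem (hQM.sos_mem (isSOS_sq (1 + X v))) (hsq v))
    have key : C (1/2:ℝ) * ((1 + X v : KPoly n s t)^2 + (C (R:ℝ) - (X v)^2))
        = C (((R:ℝ)+1)/2) + X v := by
      rw [e]; linear_combination (X v : KPoly n s t) * h2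
    rwa [key] at hmem

end MKKTlemmas


section Core

variable {n s t : ℕ}

/-- The core lemma: if `σ * p = 1 + m₀` with `σ` SOS and `m₀ ∈ S`, then `p` is in the
`ε`-closure of the archimedean quadratic module `S`. -/
lemma core {S : Set (KPoly n s t)} (hS : IsQM S) (hB : IsBdd S)
    {σ p m₀ : KPoly n s t} (hσ : IsSOS σ) (hm : m₀ ∈ S) (heq : σ * p = 1 + m₀) :
    ∀ δ : ℝ, 0 < δ → p + C δ ∈ S := by
  intro δ hδ
  obtain ⟨lam, hlam, hlm, hlp⟩ := hB p
  obtain ⟨k0, hk0, hk0m, _⟩ := hB σ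
  set c₀ : ℝ := 1 / lam with hc₀def
  have hc₀ : 0 < c₀ := by positivity
  set k : ℝ := k0 + c₀ + 1 with hkdef
  have hkc : c₀ < k := by linarith
  have hkpos : 0 < k := by linarith
  have hk : C k - σ ∈ S := by
    have hmem := hS.add_mem hk0m (hS.const_mem (le_of_lt (by positivity : (0:ℝ) < c₀ + 1)))
    rwa [show (C k0 - σ) + C (c₀ + 1) = C k - σ by
      rw [hkdef]; simp only [map_add]; ring] at hmem
  have hσlow : C lam * σ - 1 ∈ S := by
    have h1 : σ * (C lam - p) ∈ S := hS.sos_mul_mem hσ hlm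
    have h2 : σ * (C lam - p) + m₀ ∈ S := hS.add_mem h1 hm
    rwa [show σ * (C lam - p) + m₀ = C lam * σ - 1 by linear_combination -heq] at h2
  have hσc₀ : σ - C c₀ ∈ S := by
    have hmem := hS.smul_mem (c := c₀) (le_of_lt hc₀) hσlow
    rwa [show C c₀ * (C lam * σ - 1) = σ - C c₀ by
      rw [mul_sub, ← mul_assoc, ← map_mul,
        show c₀ * lam = 1 by rw [hc₀def]; field_simp, map_one, one_mul, mul_one]] at hmem
  set t0 : ℝ := 2 / (c₀ + k) with ht0def
  have hden : (0:ℝ) < c₀ + k := by linarith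
  have ht0 : 0 < t0 := by rw [ht0def]; positivity
  set w₀ : ℝ := (k - c₀) / (c₀ + k) with hw₀def
  have hw₀pos : 0 < w₀ := div_pos (by linarith) hden
  have hw₀lt : w₀ < 1 := by
    rw [hw₀def, div_lt_one hden]; linarith
  set W : KPoly n s t := 1 - C t0 * σ with hW
  have hreal1 : w₀ = 1 - t0 * c₀ := by
    rw [hw₀def, ht0def]; field_simp; ring
  have hreal2 : w₀ = t0 * k - 1 := by
    rw [hw₀def, ht0def]; field_simp; ring
  have e1 : (C w₀ : KPoly n s t) - W = C t0 * (σ - C c₀) := by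
    rw [hW, show (w₀:ℝ) = 1 - t0 * c₀ from hreal1, map_sub, map_mul, map_one]
    ring
  have e2 : (C w₀ : KPoly n s t) + W = C t0 * (C k - σ) := by
    rw [hW, show (w₀:ℝ) = t0 * k - 1 from hreal2, map_sub, map_mul, map_one]
    ring
  have hWm : C (w₀^2) - W^2 ∈ S := by
    have hsum : (σ - C c₀) + (C k - σ) = C (k - c₀) := by rw [map_sub]; ring
    have hprod : (σ - C c₀) * (C k - σ) ∈ S :=
      hS.mul_mem_of_add_const (by linarith) hσc₀ hk hsum
    have hmem := hS.smul_mem (c := t0^2) (le_of_lt (by positivity)) hprod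
    rwa [show C (t0^2) * ((σ - C c₀) * (C k - σ)) = C (w₀^2) - W^2 by
      rw [map_pow, map_pow]
      linear_combination (-(C w₀ + W)) * e1 + (-(C t0 * (σ - C c₀))) * e2] at hmem
  have hpow : ∀ N : ℕ, C (w₀^(2*N)) - W^(2*N) ∈ S := by
    intro N
    have hgs := geom_sum₂_mul (C (w₀^2) : KPoly n s t) (W^2) N
    have hsossum : IsSOS (∑ i ∈ Finset.range N, (C (w₀^2) : KPoly n s t)^i * (W^2)^(N-1-i)) := by
      have hterm : ∀ i, (C (w₀^2) : KPoly n s t)^i * (W^2)^(N-1-i)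
          = ((C w₀)^i * W^(N-1-i))^2 := by
        intro i
        calc (C (w₀^2) : KPoly n s t)^i * (W^2)^(N-1-i)
            = (C w₀)^(2*i) * W^(2*(N-1-i)) := by rw [map_pow, ← pow_mul, ← pow_mul]
          _ = ((C w₀)^i * W^(N-1-i))^2 := by
              rw [mul_pow, ← pow_mul, ← pow_mul, Nat.mul_comm i 2, Nat.mul_comm (N-1-i) 2]
      rw [Finset.sum_congr rfl (fun i _ => hterm i)]
      exact isSOS_finsetSum _ _
    have hmem := hS.sos_mul_mem hsossum hWm
    rw [hgs] at hmem
    have ec : (C (w₀^(2*N)) : KPoly n s t) = (C (w₀^2) : KPoly n s t)^N := by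
      rw [pow_mul w₀ 2 N, map_pow]
    have eW : W^(2*N) = (W^2)^N := pow_mul W 2 N
    rw [ec, eW]
    exact hmem
  have hw2lt : w₀^2 < 1 := by nlinarith
  obtain ⟨μ, hμ⟩ : ∃ μ : ℕ, (w₀^2)^μ < δ / (3 * lam) :=
    exists_pow_lt_of_lt_one (by positivity) hw2lt
  set G : KPoly n s t := ∑ i ∈ Finset.range (2*μ), W^i with hG
  have hgeom := geom_sum_mul W (2*μ)
  have key : ((1:KPoly n s t) - W) * G = 1 - W^(2*μ) := by
    rw [hG]; linear_combination -hgeom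
  have hWs : C t0 * σ = 1 - W := by rw [hW]; ring
  have hE1 : IsSOS (σ * (C t0 * G)^2) := isSOS_mul hσ (isSOS_sq _)
  have h1pm : (1:KPoly n s t) + m₀ ∈ S := hS.add_mem hS.one_mem hm
  have hT1 : σ * (C t0 * G)^2 * (1 + m₀) ∈ S := hS.sos_mul_mem hE1 h1pm
  have hT2 : W^(2*μ) * (p + C lam) ∈ S := by
    have hsos : IsSOS (W^(2*μ)) := by
      rw [show 2*μ = μ*2 from mul_comm 2 μ, pow_mul]
      exact isSOS_sq _
    have : C lam + p ∈ S := hlp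
    exact hS.sos_mul_mem hsos (by rwa [add_comm] at this)
  have hT3 : (W^(2*μ))^2 * (C lam - p) ∈ S := hS.sq_mul_mem _ hlm
  have hsq : σ * (C t0 * G)^2 * (σ * p) = (1 - W^(2*μ))^2 * p := by
    have e : σ * (C t0 * G)^2 * (σ * p) = ((C t0 * σ) * G)^2 * p := by ring
    rw [e, hWs, key]
  have hmaster : p + C lam * W^(2*μ) + C lam * W^(2*μ) + C lam * (W^(2*μ))^2
      = σ * (C t0 * G)^2 * (1 + m₀) + W^(2*μ) * (p + C lam) + W^(2*μ) * (p + C lam)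
        + (W^(2*μ))^2 * (C lam - p) := by
    rw [← heq, hsq]; ring
  have hbig : p + C lam * W^(2*μ) + C lam * W^(2*μ) + C lam * (W^(2*μ))^2 ∈ S := by
    rw [hmaster]
    exact hS.add_mem (hS.add_mem (hS.add_mem hT1 hT2) hT2) hT3
  have hw2μ : w₀^(2*μ) < δ/(3*lam) := by rw [pow_mul]; exact hμ
  have hw4μ : w₀^(2*(2*μ)) ≤ w₀^(2*μ) :=
    pow_le_pow_of_le_one (le_of_lt hw₀pos) (le_of_lt hw₀lt) (by omega)
  have hconst : 0 ≤ δ - lam * w₀^(2*μ) - lam * w₀^(2*μ) - lam * w₀^(2*(2*μ)) := by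
    have h1 : lam * w₀^(2*μ) < δ/3 := by
      have := (mul_lt_mul_iff_right₀ hlam).mpr hw2μ
      rw [show lam * (δ/(3*lam)) = δ/3 by field_simp] at this
      exact this
    have h2 : lam * w₀^(2*(2*μ)) ≤ lam * w₀^(2*μ) := by
      exact mul_le_mul_of_nonneg_left hw4μ (le_of_lt hlam)
    linarith
  have hcert : C δ - (C lam * W^(2*μ) + C lam * W^(2*μ) + C lam * (W^(2*μ))^2) ∈ S := by
    have t1 := hS.smul_mem (c := lam) (le_of_lt hlam) (hpow μ)
    have t2 := hS.smul_mem (c := lam) (le_of_lt hlam) (hpow (2*μ))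
    have t0m := hS.const_mem hconst
    have hmem := hS.add_mem (hS.add_mem (hS.add_mem t0m t1) t1) t2
    rwa [show C (δ - lam * w₀^(2*μ) - lam * w₀^(2*μ) - lam * w₀^(2*(2*μ)))
        + C lam * (C (w₀^(2*μ)) - W^(2*μ)) + C lam * (C (w₀^(2*μ)) - W^(2*μ))
        + C lam * (C (w₀^(2*(2*μ))) - W^(2*(2*μ)))
        = C δ - (C lam * W^(2*μ) + C lam * W^(2*μ) + C lam * (W^(2*μ))^2) by
      have eWW : W^(2*(2*μ)) = (W^(2*μ))^2 := by rw [← pow_mul]; congr 1; ring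
      simp only [map_sub, map_mul, eWW]
      ring] at hmem
  have final := hS.add_mem hbig hcert
  rwa [show (p + C lam * W^(2*μ) + C lam * W^(2*μ) + C lam * (W^(2*μ))^2)
      + (C δ - (C lam * W^(2*μ) + C lam * W^(2*μ) + C lam * (W^(2*μ))^2)) = p + C δ by ring]
    at final

end Core


section Maximal

variable {n s t : ℕ}

lemma exists_maximal_ext {N : Set (KPoly n s t)} (hN : IsQM N) (h1 : (-1 : KPoly n s t) ∉ N) :
    ∃ S : Set (KPoly n s t), IsQM S ∧ N ⊆ S ∧ (-1 : KPoly n s t) ∉ S ∧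
      (∀ a : KPoly n s t, a ∈ S ∨ -a ∈ S) := by
  classical
  set F : Set (Set (KPoly n s t)) := {T | IsQM T ∧ N ⊆ T ∧ (-1 : KPoly n s t) ∉ T} with hF
  have hchains : ∀ c ⊆ F, IsChain (· ⊆ ·) c → c.Nonempty →
      ∃ ub ∈ F, ∀ T ∈ c, T ⊆ ub := by
    rintro c hcF hchain ⟨T0, hT0⟩
    refine ⟨⋃₀ c, ⟨?_, ?_, ?_⟩, fun T hT => Set.subset_sUnion_of_mem hT⟩
    · constructor
      · rintro a b ⟨T1, hT1, ha⟩ ⟨T2, hT2, hb⟩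
        rcases hchain.total hT1 hT2 with h12 | h21
        · exact ⟨T2, hT2, (hcF hT2).1.add_mem (h12 ha) hb⟩
        · exact ⟨T1, hT1, (hcF hT1).1.add_mem ha (h21 hb)⟩
      · rintro τ a hτ ⟨T1, hT1, ha⟩
        exact ⟨T1, hT1, (hcF hT1).1.sos_mul_mem hτ ha⟩
      · exact ⟨T0, hT0, (hcF hT0).1.one_mem⟩
    · exact fun x hx => ⟨T0, hT0, (hcF hT0).2.1 hx⟩
    · rintro ⟨T1, hT1, hmem⟩
      exact (hcF hT1).2.2 hmem
  obtain ⟨S, hNS, hSmax⟩ := zorn_subset_nonempty F hchains N ⟨hN, subset_rfl, h1⟩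
  obtain ⟨hSQM, hNsub, hS1⟩ := hSmax.1
  refine ⟨S, hSQM, hNS, hS1, ?_⟩
  intro a
  by_contra hcon
  push_neg at hcon
  obtain ⟨ha, hna⟩ := hcon
  have hQa : ∀ b : KPoly n s t, b ∉ S →
      ∃ s' ∈ S, ∃ τ, IsSOS τ ∧ (-1 : KPoly n s t) = s' + τ * b := by
    intro b hb
    set T : Set (KPoly n s t) := {x | ∃ s' ∈ S, ∃ τ, IsSOS τ ∧ x = s' + τ * b} with hT
    have hTQM : IsQM T := by
      constructor
      · rintro x y ⟨s1, hs1, τ1, hτ1, rfl⟩ ⟨s2, hs2, τ2, hτ2, rfl⟩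
        exact ⟨s1 + s2, hSQM.add_mem hs1 hs2, τ1 + τ2, isSOS_add hτ1 hτ2, by ring⟩
      · rintro τ x hτ ⟨s1, hs1, τ1, hτ1, rfl⟩
        exact ⟨τ * s1, hSQM.sos_mul_mem hτ hs1, τ * τ1, isSOS_mul hτ hτ1, by ring⟩
      · exact ⟨1, hSQM.one_mem, 0, isSOS_zero, by ring⟩
    have hST : S ⊆ T := fun x hx => ⟨x, hx, 0, isSOS_zero, by ring⟩
    have hbT : b ∈ T := ⟨0, hSQM.zero_mem, 1, isSOS_one, by ring⟩
    have h1T : (-1 : KPoly n s t) ∈ T := by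
      by_contra h1T
      have hTF : T ∈ F := ⟨hTQM, Set.Subset.trans hNS hST, h1T⟩
      have : T ⊆ S := hSmax.2 hTF hST
      exact hb (this hbT)
    obtain ⟨s', hs', τ, hτ, hEq⟩ := h1T
    exact ⟨s', hs', τ, hτ, hEq⟩
  obtain ⟨s1, hs1, τ1, hτ1, hEq1⟩ := hQa a ha
  obtain ⟨s2, hs2, τ2, hτ2, hEq2⟩ := hQa (-a) hna
  have hsum : -(τ1 + τ2) ∈ S := by
    have hx1 : τ2 * s1 ∈ S := hSQM.sos_mul_mem hτ2 hs1
    have hx2 : τ1 * s2 ∈ S := hSQM.sos_mul_mem hτ1 hs2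
    have hmem := hSQM.add_mem hx1 hx2
    rwa [show τ2 * s1 + τ1 * s2 = -(τ1 + τ2) by
      linear_combination (-τ2) * hEq1 + (-τ1) * hEq2] at hmem
  have hτ1neg : -τ1 ∈ S := by
    have hmem := hSQM.add_mem hsum (hSQM.sos_mem hτ2)
    rwa [show -(τ1 + τ2) + τ2 = -τ1 by ring] at hmem
  have hτ1a : τ1 * a ∈ S := by
    have hq1 : ((a+1)^2) * τ1 ∈ S := hSQM.sq_mul_mem _ (hSQM.sos_mem hτ1)
    have hq2 : ((a-1)^2) * (-τ1) ∈ S := hSQM.sq_mul_mem _ hτ1neg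
    have hsum4 := hSQM.smul_mem (c := 1/4) (by norm_num) (hSQM.add_mem hq1 hq2)
    have h4 : (C (1/4 : ℝ) : KPoly n s t) * 4 = 1 := by
      rw [show (4 : KPoly n s t) = C 4 by simp [map_ofNat], ← map_mul]; norm_num
    rwa [show C (1/4:ℝ) * ((a+1)^2 * τ1 + (a-1)^2 * (-τ1)) = τ1 * a by
      linear_combination (τ1 * a) * h4] at hsum4
  have : (-1 : KPoly n s t) ∈ S := by
    rw [hEq1]; exact hSQM.add_mem hs1 hτ1a
  exact hS1 this

end Maximal

section Phi

variable {n s t : ℕ}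

/-- A "good cone": archimedean bounded proper quadratic module satisfying
`S ∪ -S = everything`. -/
structure GoodCone (S : Set (KPoly n s t)) : Prop where
  qm : IsQM S
  bdd : IsBdd S
  notone : (-1 : KPoly n s t) ∉ S
  union : ∀ a : KPoly n s t, a ∈ S ∨ -a ∈ S

variable (S : Set (KPoly n s t))

/-- The induced "evaluation" functional. -/
def phi (a : KPoly n s t) : ℝ := sInf {r : ℝ | C r - a ∈ S}

variable {S}

lemma le_of_forall_eps {a b : ℝ} (h : ∀ ε : ℝ, 0 < ε → a ≤ b + ε) : a ≤ b := by
  by_contra hc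
  push_neg at hc
  have := h ((a - b)/2) (by linarith)
  linarith

namespace GoodCone

variable (hG : GoodCone S)
include hG

lemma neg_const_not {e : ℝ} (he : e < 0) : (C e : KPoly n s t) ∉ S := fun hmem =>
  hG.notone (hG.qm.neg_one_mem_of_const he hmem)

lemma Rne (a : KPoly n s t) : {r : ℝ | C r - a ∈ S}.Nonempty := by
  obtain ⟨N, _, h1, _⟩ := hG.bdd a
  exact ⟨N, h1⟩

lemma Rbb (a : KPoly n s t) : BddBelow {r : ℝ | C r - a ∈ S} := by
  obtain ⟨N, _, _, h2⟩ := hG.bdd a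
  refine ⟨-N, fun r hr => ?_⟩
  by_contra hc
  push_neg at hc
  have hmem := hG.qm.add_mem hr h2
  rw [show (C r - a) + (C N + a) = C (r + N) by rw [map_add]; ring] at hmem
  exact hG.neg_const_not (by linarith) hmem

lemma phi_le {a : KPoly n s t} {r : ℝ} (h : C r - a ∈ S) : phi S a ≤ r :=
  csInf_le (hG.Rbb a) h

lemma upward {a : KPoly n s t} {r r' : ℝ} (h : C r - a ∈ S) (hrr : r ≤ r') :
    C r' - a ∈ S := by
  have hmem := hG.qm.add_mem h (hG.qm.const_mem (by linarith : (0:ℝ) ≤ r' - r))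
  rwa [show (C r - a) + C (r' - r) = C r' - a by rw [map_sub]; ring] at hmem

lemma mem_of_phi_lt {a : KPoly n s t} {r : ℝ} (h : phi S a < r) : C r - a ∈ S := by
  obtain ⟨b, hb, hbr⟩ := (csInf_lt_iff (hG.Rbb a) (hG.Rne a)).mp h
  exact hG.upward hb (le_of_lt hbr)

lemma le_phi {a : KPoly n s t} {b : ℝ} (h : ∀ r, C r - a ∈ S → b ≤ r) : b ≤ phi S a :=
  le_csInf (hG.Rne a) h

lemma phi_nonneg {a : KPoly n s t} (ha : a ∈ S) : 0 ≤ phi S a := by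
  apply hG.le_phi
  intro r hr
  by_contra hc
  push_neg at hc
  have hmem := hG.qm.add_mem hr ha
  rw [show (C r - a) + a = C r by ring] at hmem
  exact hG.neg_const_not hc hmem

lemma phi_neg (a : KPoly n s t) : phi S (-a) = - phi S a := by
  have hge : - phi S a ≤ phi S (-a) := by
    apply hG.le_phi
    intro r' hr'
    rw [neg_le]
    apply hG.le_phi
    intro r hr
    have hmem := hG.qm.add_mem hr hr'
    rw [show (C r - a) + (C r' - -a) = C (r + r') by rw [map_add]; ring] at hmem
    by_contra hc
    push_neg at hc
    exact hG.neg_const_not (by linarith) hmem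
  have hle : phi S (-a) ≤ - phi S a := by
    by_contra hc
    push_neg at hc
    set θ : ℝ := phi S (-a) + phi S a with hθ
    have hθpos : 0 < θ := by rw [hθ]; linarith
    have hnot : C (phi S a - θ/2) - a ∉ S := by
      intro hmem
      have := hG.phi_le hmem
      linarith
    have hU := hG.union (C (phi S a - θ/2) - a)
    rcases hU with h | h
    · exact hnot h
    · rw [show -(C (phi S a - θ/2) - a) = C (-(phi S a - θ/2)) - (-a) by
        rw [map_neg]; ring] at h
      have hle' := hG.phi_le h
      rw [hθ] at hle'
      linarith
  linarith

lemma phi_add_le (a b : KPoly n s t) : phi S (a + b) ≤ phi S a + phi S b := by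
  apply le_of_forall_eps
  intro ε hε
  have h1 : C (phi S a + ε/2) - a ∈ S := hG.mem_of_phi_lt (by linarith)
  have h2 : C (phi S b + ε/2) - b ∈ S := hG.mem_of_phi_lt (by linarith)
  have hmem := hG.qm.add_mem h1 h2
  rw [show (C (phi S a + ε/2) - a) + (C (phi S b + ε/2) - b)
      = C (phi S a + phi S b + ε) - (a + b) by
    have hC : (C (phi S a + phi S b + ε) : KPoly n s t)
        = C (phi S a + ε/2) + C (phi S b + ε/2) := by
      rw [← map_add]; congr 1; ring
    rw [hC]; ring] at hmem
  exact hG.phi_le hmem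

lemma phi_add (a b : KPoly n s t) : phi S (a + b) = phi S a + phi S b := by
  have h1 := hG.phi_add_le a b
  have h2 := hG.phi_add_le (-a) (-b)
  rw [show -a + -b = -(a+b) by ring, hG.phi_neg, hG.phi_neg, hG.phi_neg] at h2
  linarith

lemma phi_C (r : ℝ) : phi S (C r) = r := by
  have h1 : phi S (C r) ≤ r := hG.phi_le (by rw [sub_self]; exact hG.qm.zero_mem)
  have h2 : r ≤ phi S (C r) := by
    apply hG.le_phi
    intro r' hr'
    rw [show (C r' : KPoly n s t) - C r = C (r' - r) by rw [map_sub]] at hr'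
    by_contra hc
    push_neg at hc
    exact hG.neg_const_not (by linarith) hr'
  linarith

lemma phi_zero : phi S 0 = 0 := by
  have := hG.phi_C 0
  rwa [map_zero] at this

lemma phi_smul_le {c : ℝ} (hc : 0 < c) (a : KPoly n s t) : phi S (C c * a) ≤ c * phi S a := by
  apply le_of_forall_eps
  intro ε hε
  have h1 : C (phi S a + ε/c) - a ∈ S := hG.mem_of_phi_lt
    (by have : 0 < ε / c := by positivity
        linarith)
  have hmem := hG.qm.smul_mem (le_of_lt hc) h1
  rw [show C c * (C (phi S a + ε/c) - a) = C (c * phi S a + ε) - C c * a by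
    rw [mul_sub, ← map_mul, mul_add, mul_div_cancel₀ _ (ne_of_gt hc)]] at hmem
  exact hG.phi_le hmem

lemma phi_smul_pos {c : ℝ} (hc : 0 < c) (a : KPoly n s t) : phi S (C c * a) = c * phi S a := by
  have h1 := hG.phi_smul_le hc a
  have h2 := hG.phi_smul_le (c := 1/c) (by positivity) (C c * a)
  rw [show (C (1/c) : KPoly n s t) * (C c * a) = a by
    rw [← mul_assoc, ← map_mul, one_div, inv_mul_cancel₀ (ne_of_gt hc), map_one, one_mul]] at h2
  have : c * phi S a ≤ c * ((1/c) * phi S (C c * a)) := by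
    apply mul_le_mul_of_nonneg_left h2 (le_of_lt hc)
  rw [← mul_assoc, mul_one_div, div_self (ne_of_gt hc), one_mul] at this
  linarith

lemma phi_smul (c : ℝ) (a : KPoly n s t) : phi S (C c * a) = c * phi S a := by
  rcases lt_trichotomy c 0 with h | h | h
  · have := hG.phi_smul_pos (c := -c) (by linarith) a
    have e : (C (-c) : KPoly n s t) * a = -(C c * a) := by rw [map_neg]; ring
    rw [e, hG.phi_neg] at this
    linarith
  · subst h; rw [map_zero, zero_mul, hG.phi_zero, zero_mul]
  · exact hG.phi_smul_pos h a

lemma phi_sq (a : KPoly n s t) : phi S (a ^ 2) = (phi S a) ^ 2 := by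
  set γ : ℝ := phi S a with hγ
  set d : KPoly n s t := a - C γ with hddef
  have hphid : phi S d = 0 := by
    rw [hddef, sub_eq_add_neg, ← map_neg]
    rw [hG.phi_add, hG.phi_C]
    rw [← hγ]; ring
  have hdsq : phi S (d ^ 2) = 0 := by
    have hge : 0 ≤ phi S (d ^ 2) := hG.phi_nonneg (hG.qm.sos_mem (isSOS_sq d))
    have hle : ∀ ε : ℝ, 0 < ε → phi S (d ^ 2) ≤ ε ^ 2 := by
      intro ε hε
      have h1 : C ε - d ∈ S := hG.mem_of_phi_lt (by rw [hphid]; exact hε)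
      have h2 : C ε + d ∈ S := by
        have : C ε - (-d) ∈ S := hG.mem_of_phi_lt (by rw [hG.phi_neg, hphid]; simpa using hε)
        rwa [sub_neg_eq_add] at this
      have hm1 : (C ε + d)^2 * (C ε - d) ∈ S := hG.qm.sq_mul_mem _ h1
      have hm2 : (C ε - d)^2 * (C ε + d) ∈ S := hG.qm.sq_mul_mem _ h2
      have hmem := hG.qm.smul_mem (c := 1/(2*ε)) (by positivity) (hG.qm.add_mem hm1 hm2)
      have hid : C (1/(2*ε)) * ((C ε + d)^2 * (C ε - d) + (C ε - d)^2 * (C ε + d))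
          = C (ε^2) - d^2 := by
        have h2e : (C (1/(2*ε)) : KPoly n s t) * C (2*ε) = 1 := by
          rw [← map_mul, one_div, inv_mul_cancel₀ (by positivity : (2*ε : ℝ) ≠ 0), map_one]
        have expand : (C ε + d)^2 * (C ε - d) + (C ε - d)^2 * (C ε + d)
            = C (2*ε) * (C (ε^2) - d^2) := by
          rw [show (C (2*ε) : KPoly n s t) = 2 * C ε by rw [map_mul]; simp [map_ofNat],
            map_pow]
          ring
        rw [expand, ← mul_assoc, h2e, one_mul]
      rw [hid] at hmem
      exact hG.phi_le hmem
    by_contra hne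
    have hpos : 0 < phi S (d ^ 2) := lt_of_le_of_ne hge (Ne.symm hne)
    have := hle (Real.sqrt (phi S (d ^ 2) / 2)) (Real.sqrt_pos.mpr (by linarith))
    rw [Real.sq_sqrt (by linarith)] at this
    linarith
  have e : a^2 = d^2 + (C (2*γ) * a + C (-(γ^2))) := by
    rw [hddef, map_neg, show (C (2*γ) : KPoly n s t) = 2 * C γ by rw [map_mul]; simp [map_ofNat],
      show (C (γ^2) : KPoly n s t) = (C γ)^2 from map_pow _ _ _]
    ring
  rw [e, hG.phi_add, hG.phi_add, hG.phi_smul, hG.phi_C, hdsq, ← hγ]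
  ring

lemma phi_mul (a b : KPoly n s t) : phi S (a * b) = phi S a * phi S b := by
  have h4 : (C (1/4 : ℝ) : KPoly n s t) * 4 = 1 := by
    rw [show (4 : KPoly n s t) = C 4 by simp [map_ofNat], ← map_mul]; norm_num
  have e : a * b = C (1/4) * (a+b)^2 + C (-(1/4)) * (a-b)^2 := by
    rw [map_neg]
    linear_combination (-(a*b)) * h4
  rw [e, hG.phi_add, hG.phi_smul, hG.phi_smul, hG.phi_sq, hG.phi_sq,
    show a - b = a + -b by ring, hG.phi_add, hG.phi_add, hG.phi_neg]
  ring

lemma phi_eval (p : KPoly n s t) :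
    phi S p = eval (fun v => phi S (X v)) p := by
  induction p using MvPolynomial.induction_on with
  | C r => rw [hG.phi_C]; simp
  | add p q hp hq => rw [hG.phi_add, map_add, hp, hq]
  | mul_X p v hp => rw [hG.phi_mul, map_mul, hp]; simp

lemma exists_point : ∃ z : KVar n s t → ℝ, ∀ u ∈ S, 0 ≤ eval z u := by
  refine ⟨fun v => phi S (X v), fun u hu => ?_⟩
  rw [← hG.phi_eval]
  exact hG.phi_nonneg hu

end GoodCone

end Phi


section Main

variable {n s t : ℕ} (f : MvPolynomial (Fin n) ℝ) (g : Fin s → MvPolynomial (Fin n) ℝ)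
  (h : Fin t → MvPolynomial (Fin n) ℝ)

lemma FF_mem_IKKT (k : Fin n) : FF n s t f g h k ∈ IKKT n s t f g h :=
  Ideal.subset_span (Set.mem_union_left _ (Set.mem_union_left _ ⟨k, rfl⟩))

lemma liftg_mem_IKKT (i : Fin s) : liftX n s t (g i) ∈ IKKT n s t f g h :=
  Ideal.subset_span (Set.mem_union_left _ (Set.mem_union_right _ ⟨i, rfl⟩))

lemma nuh_mem_IKKT (j : Fin t) : nuX n s t j * liftX n s t (h j) ∈ IKKT n s t f g h :=
  Ideal.subset_span (Set.mem_union_right _ ⟨j, rfl⟩)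

lemma isSOS_eval_nonneg {p : KPoly n s t} (hp : IsSOS p) (z : KVar n s t → ℝ) :
    0 ≤ eval z p := by
  obtain ⟨m, q, rfl⟩ := hp
  rw [map_sum]
  refine Finset.sum_nonneg fun i _ => ?_
  rw [map_pow]
  positivity

theorem main1
    (fstar : ℝ)
    (hmin : ∀ x ∈ Feas n s t g h, fstar ≤ eval x f)
    (harch : ∃ R : ℕ, (C (R : ℝ) : KPoly n s t)
      - ((∑ k, (X (Sum.inl k) : KPoly n s t) ^ 2) + (∑ i, lamX n s t i ^ 2)
        + (∑ j, nuX n s t j ^ 2)) ∈ MKKT n s t f g h) :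
    ∀ ε : ℝ, 0 < ε → liftX n s t f - C (fstar - ε) ∈ MKKT n s t f g h := by
  intro ε hε
  by_contra hcon
  have hQM : IsQM (MKKT n s t f g h) := isQM_MKKT f g h
  have hBdd : IsBdd (MKKT n s t f g h) := isBdd_MKKT f g h harch
  set p' : KPoly n s t := liftX n s t f - C (fstar - ε/2) with hp'
  have hsplit : liftX n s t f - C (fstar - ε) = p' + C (ε/2) := by
    rw [hp', show (C (fstar - ε) : KPoly n s t) = C (fstar - ε/2) - C (ε/2) by
      rw [← map_sub]; congr 1; ring]
    ring
  rw [hsplit] at hcon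
  by_cases hcase : ∃ m₀ ∈ MKKT n s t f g h, ∃ σ, IsSOS σ ∧ σ * p' = 1 + m₀
  · obtain ⟨m₀, hm₀, σ, hσ, heq⟩ := hcase
    exact hcon (core hQM hBdd hσ hm₀ heq (ε/2) (by linarith))
  · set N : Set (KPoly n s t) := {x | ∃ m ∈ MKKT n s t f g h, ∃ σ, IsSOS σ ∧ x = m - σ * p'}
      with hNdef
    have hNQM : IsQM N := by
      constructor
      · rintro x y ⟨m1, hm1, σ1, hσ1, rfl⟩ ⟨m2, hm2, σ2, hσ2, rfl⟩
        exact ⟨m1 + m2, hQM.add_mem hm1 hm2, σ1 + σ2, isSOS_add hσ1 hσ2, by ring⟩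
      · rintro τ x hτ ⟨m1, hm1, σ1, hσ1, rfl⟩
        exact ⟨τ * m1, hQM.sos_mul_mem hτ hm1, τ * σ1, isSOS_mul hτ hσ1, by ring⟩
      · exact ⟨1, hQM.one_mem, 0, isSOS_zero, by ring⟩
    have hMN : MKKT n s t f g h ⊆ N := fun x hx => ⟨x, hx, 0, isSOS_zero, by ring⟩
    have hN1 : (-1 : KPoly n s t) ∉ N := by
      rintro ⟨m₀, hm₀, σ, hσ, hEq⟩
      exact hcase ⟨m₀, hm₀, σ, hσ, by linear_combination hEq⟩
    obtain ⟨S, hSQM, hNS, hS1, hSU⟩ := exists_maximal_ext hNQM hN1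
    have hMS : MKKT n s t f g h ⊆ S := hMN.trans hNS
    have hGood : GoodCone S := by
      refine ⟨hSQM, fun a => ?_, hS1, hSU⟩
      obtain ⟨Na, h0, h1, h2⟩ := hBdd a
      exact ⟨Na, h0, hMS h1, hMS h2⟩
    obtain ⟨z, hz⟩ := hGood.exists_point
    have hzero : ∀ q ∈ IKKT n s t f g h, eval z q = 0 := by
      intro q hq
      have h1 : 0 ≤ eval z q := hz _ (hMS (mem_MKKT_of_ideal f g h hq))
      have h2 : 0 ≤ eval z (-q) := hz _ (hMS (mem_MKKT_of_ideal f g h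
        (neg_mem hq)))
      rw [map_neg] at h2
      linarith
    have hxFeas : (z ∘ Sum.inl) ∈ Feas n s t g h := by
      constructor
      · intro i
        have hgz := hzero _ (liftg_mem_IKKT f g h i)
        simp only [liftX] at hgz
        rwa [eval_rename] at hgz
      · intro j
        have hhz := hz _ (hMS (lifth_mem_MKKT f g h j))
        simp only [liftX] at hhz
        rwa [eval_rename] at hhz
    have hfe : fstar ≤ eval (z ∘ Sum.inl) f := hmin _ hxFeas
    have hp'pos : 0 < eval z p' := by
      rw [hp', map_sub, eval_C]
      simp only [liftX]
      rw [eval_rename]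
      linarith
    have hnegp' : -p' ∈ S := hNS ⟨0, hQM.zero_mem, 1, isSOS_one, by ring⟩
    have hfin := hz _ hnegp'
    rw [map_neg] at hfin
    linarith

end Main

end Stmt8Aux

/-- If the global minimum `f*` is attained at a KKT point and `M_KKT`
is archimedean, then `f − (f* − ε) ∈ M_KKT` for all `ε > 0`; consequently
`sup{γ : f − γ ∈ M_KKT} = f*` and the lower bounds `f*_N` of the linear-cone SOS
relaxations converge to `f*`. -/
theorem stmt8 (n s t : ℕ) (f : MvPolynomial (Fin n) ℝ) (g : Fin s → MvPolynomial (Fin n) ℝ)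
    (h : Fin t → MvPolynomial (Fin n) ℝ) (fstar : ℝ)
    (xstar : Fin n → ℝ) (lamstar : Fin s → ℝ) (nustar : Fin t → ℝ)
    (hxF : xstar ∈ Feas n s t g h)
    (hval : eval xstar f = fstar)
    (hmin : ∀ x ∈ Feas n s t g h, fstar ≤ eval x f)
    (hkkt : Sum.elim xstar (Sum.elim lamstar nustar) ∈
      VRKKT n s t f g h ∩ HSet n s t h)
    (harch : ∃ R : ℕ, (C (R : ℝ) : KPoly n s t)
      - ((∑ k, (X (Sum.inl k) : KPoly n s t) ^ 2) + (∑ i, lamX n s t i ^ 2)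
        + (∑ j, nuX n s t j ^ 2)) ∈ MKKT n s t f g h) :
    (∀ ε : ℝ, 0 < ε → liftX n s t f - C (fstar - ε) ∈ MKKT n s t f g h) ∧
    sSup {γ : ℝ | liftX n s t f - C γ ∈ MKKT n s t f g h} = fstar ∧
    Tendsto (fun N : ℕ => sSup {γ : ℝ | liftX n s t f - C γ ∈ MTrunc n s t f g h N})
      atTop (nhds fstar) := by
  classical
  have hmain := Stmt8Aux.main1 f g h fstar hmin harch
  set zstar : KVar n s t → ℝ := Sum.elim xstar (Sum.elim lamstar nustar) with hzs
  have hzeval : ∀ u ∈ MKKT n s t f g h, 0 ≤ eval zstar u := by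
    rintro u ⟨σ0, σ, hσ0, hσA, q, hq, rfl⟩
    have e0 : 0 ≤ eval zstar σ0 := Stmt8Aux.isSOS_eval_nonneg hσ0 zstar
    have e1 : 0 ≤ eval zstar (∑ j, σ j * liftX n s t (h j)) := by
      rw [map_sum]
      refine Finset.sum_nonneg fun j _ => ?_
      rw [map_mul]
      exact mul_nonneg (Stmt8Aux.isSOS_eval_nonneg (hσA j) zstar) (hkkt.2 j)
    have e2 : eval zstar q = 0 := hkkt.1 q hq
    rw [map_add, map_add, e2]
    linarith
  have hfzstar : eval zstar (liftX n s t f) = fstar := by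
    simp only [liftX]
    rw [eval_rename, hzs, Sum.elim_comp_inl]
    exact hval
  have hub : ∀ γ ∈ {γ : ℝ | liftX n s t f - C γ ∈ MKKT n s t f g h}, γ ≤ fstar := by
    intro γ hγ
    have h0 := hzeval _ hγ
    rw [map_sub, eval_C, hfzstar] at h0
    linarith
  have hne : Set.Nonempty {γ : ℝ | liftX n s t f - C γ ∈ MKKT n s t f g h} :=
    ⟨fstar - 1, hmain 1 one_pos⟩
  have hba : BddAbove {γ : ℝ | liftX n s t f - C γ ∈ MKKT n s t f g h} := ⟨fstar, hub⟩
  refine ⟨hmain, ?_, ?_⟩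
  · apply le_antisymm (csSup_le hne hub)
    by_contra hc
    push_neg at hc
    have hmem := hmain ((fstar - sSup {γ : ℝ | liftX n s t f - C γ ∈ MKKT n s t f g h})/2)
      (by linarith)
    have hle := le_csSup hba hmem
    linarith
  · have hsub : ∀ Nn : ℕ, ∀ u, u ∈ MTrunc n s t f g h Nn → u ∈ MKKT n s t f g h := by
      rintro Nn u ⟨σ0, σ, hσ0, hσA, _, _, q, hqT, rfl⟩
      refine ⟨σ0, σ, hσ0, hσA, q, ?_, rfl⟩
      obtain ⟨φ, ψ, χ, _, _, _, rfl⟩ := hqT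
      refine Ideal.add_mem _ (Ideal.add_mem _ ?_ ?_) ?_
      · exact Ideal.sum_mem _ fun k _ =>
          Ideal.mul_mem_left _ _ (Stmt8Aux.FF_mem_IKKT f g h k)
      · exact Ideal.sum_mem _ fun i _ =>
          Ideal.mul_mem_left _ _ (Stmt8Aux.liftg_mem_IKKT f g h i)
      · exact Ideal.sum_mem _ fun j _ =>
          Ideal.mul_mem_left _ _ (Stmt8Aux.nuh_mem_IKKT f g h j)
    have hubN : ∀ Nn : ℕ, ∀ γ ∈ {γ : ℝ | liftX n s t f - C γ ∈ MTrunc n s t f g h Nn},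
        γ ≤ fstar := fun Nn γ hγ => hub γ (hsub Nn _ hγ)
    have hkey : ∀ ε : ℝ, 0 < ε → ∃ N₀ : ℕ, ∀ Nn ≥ N₀,
        liftX n s t f - C (fstar - ε) ∈ MTrunc n s t f g h Nn := by
      intro ε hε
      obtain ⟨σ0, σ, hσ0, hσA, q, hq, hrep⟩ := hmain ε hε
      have hspan : q ∈ Ideal.span (Set.range (Sum.elim (FF n s t f g h)
          (Sum.elim (fun i => liftX n s t (g i))
            (fun j => nuX n s t j * liftX n s t (h j))))) := by
        rw [IKKT] at hq
        rwa [Set.Sum.elim_range, Set.Sum.elim_range, ← Set.union_assoc]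
      obtain ⟨c, hc⟩ := (Submodule.mem_span_range_iff_exists_fun (KPoly n s t)).mp hspan
      set φ : Fin n → KPoly n s t := fun k => c (Sum.inl k) with hφ
      set ψ : Fin s → KPoly n s t := fun i => c (Sum.inr (Sum.inl i)) with hψ
      set χ : Fin t → KPoly n s t := fun j => c (Sum.inr (Sum.inr j)) with hχ
      have hqrep : q = (∑ k, φ k * FF n s t f g h k) + (∑ i, ψ i * liftX n s t (g i))
          + (∑ j, χ j * (nuX n s t j * liftX n s t (h j))) := by
        rw [← hc, Fintype.sum_sum_type, Fintype.sum_sum_type]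
        simp only [smul_eq_mul, Sum.elim_inl, Sum.elim_inr, hφ, hψ, hχ]
        ring
      set A0 : ℕ := σ0.totalDegree with hA0
      set A1 : ℕ := Finset.univ.sup fun j => (σ j * liftX n s t (h j)).totalDegree with hA1
      set A2 : ℕ := Finset.univ.sup fun k => (φ k * FF n s t f g h k).totalDegree with hA2
      set A3 : ℕ := Finset.univ.sup fun i => (ψ i * liftX n s t (g i)).totalDegree with hA3
      set A4 : ℕ := Finset.univ.sup
        fun j => (χ j * (nuX n s t j * liftX n s t (h j))).totalDegree with hA4
      refine ⟨max A0 (max A1 (max A2 (max A3 A4))), fun Nn hNn => ?_⟩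
      have hb0 : A0 ≤ Nn := le_trans (le_max_left _ _) hNn
      have hb1 : A1 ≤ Nn := le_trans (le_trans (le_max_left _ _) (le_max_right _ _)) hNn
      have hb2 : A2 ≤ Nn := le_trans (le_trans (le_trans (le_max_left _ _)
        (le_max_right _ _)) (le_max_right _ _)) hNn
      have hb3 : A3 ≤ Nn := le_trans (le_trans (le_trans (le_trans (le_max_left _ _)
        (le_max_right _ _)) (le_max_right _ _)) (le_max_right _ _)) hNn
      have hb4 : A4 ≤ Nn := le_trans (le_trans (le_trans (le_trans (le_max_right _ _)
        (le_max_right _ _)) (le_max_right _ _)) (le_max_right _ _)) hNn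
      refine ⟨σ0, σ, hσ0, hσA, hb0, ?_, q, ⟨φ, ψ, χ, ?_, ?_, ?_, hqrep⟩, hrep⟩
      · intro j
        exact le_trans (Finset.le_sup (f := fun j => (σ j * liftX n s t (h j)).totalDegree)
          (Finset.mem_univ j)) hb1
      · intro k
        exact le_trans (Finset.le_sup (f := fun k => (φ k * FF n s t f g h k).totalDegree)
          (Finset.mem_univ k)) hb2
      · intro i
        exact le_trans (Finset.le_sup (f := fun i => (ψ i * liftX n s t (g i)).totalDegree)
          (Finset.mem_univ i)) hb3
      · intro j
        exact le_trans (Finset.le_sup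
          (f := fun j => (χ j * (nuX n s t j * liftX n s t (h j))).totalDegree)
          (Finset.mem_univ j)) hb4
    rw [Metric.tendsto_atTop]
    intro ε hε
    obtain ⟨N₀, hN₀⟩ := hkey (ε/2) (by linarith)
    refine ⟨N₀, fun Nn hNn => ?_⟩
    have hmemN := hN₀ Nn hNn
    have hneN : Set.Nonempty {γ : ℝ | liftX n s t f - C γ ∈ MTrunc n s t f g h Nn} :=
      ⟨fstar - ε/2, hmemN⟩
    have hbaN : BddAbove {γ : ℝ | liftX n s t f - C γ ∈ MTrunc n s t f g h Nn} :=
      ⟨fstar, fun γ hγ => hubN Nn γ hγ⟩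
    have h1 : sSup {γ : ℝ | liftX n s t f - C γ ∈ MTrunc n s t f g h Nn} ≤ fstar :=
      csSup_le hneN (hubN Nn)
    have h2 : fstar - ε/2 ≤ sSup {γ : ℝ | liftX n s t f - C γ ∈ MTrunc n s t f g h Nn} :=
      le_csSup hbaN hmemN
    rw [Real.dist_eq]
    exact abs_lt.mpr ⟨by linarith, by linarith⟩

end
end

section
/- Let 0 < ε < 1, and in ℝ[x_1, x_2, x_3] let f = (x_3 − x_1² x_2)² − 1 + ε, h_1 = 1 − x_1², h_2 = x_2, h_3 = x_3 − x_2 − 1 (with no equality constraints, s = 0, t = 3). Then f does not belong to the linear cone M_KKT ⊆ ℝ[x_1, x_2, x_3, ν_1, ν_2, ν_3], even though f is strictly positive on V^ℝ_KKT ∩ H and I_KKT is radical. That is, there exist no SOS polynomials σ_0, σ_1, σ_2, σ_3 and polynomials φ_1, …, φ_6 in ℝ[x, ν] with f = σ_0 + σ_1 h_1 + σ_2 h_2 + σ_3 h_3 + φ_1 F_1 + φ_2 F_2 + φ_3 F_3 + φ_4 ν_1 h_1 + φ_5 ν_2 h_2 + φ_6 ν_3 h_3. -/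
open MvPolynomial

noncomputable section

/-- Variables `x_1, x_2, x_3, ν_1, ν_2, ν_3`. -/
abbrev EVar := Sum (Fin 3) (Fin 3)

/-- The polynomial ring `ℝ[x, ν]`. -/
abbrev EPoly := MvPolynomial EVar ℝ

/-- The constraints `h_1 = 1 − x_1², h_2 = x_2, h_3 = x_3 − x_2 − 1`. -/
def eh : Fin 3 → MvPolynomial (Fin 3) ℝ :=
  ![1 - X 0 ^ 2, X 1, X 2 - X 1 - 1]

/-- The objective `f = (x_3 − x_1² x_2)² − 1 + ε`. -/
def ef (ε : ℝ) : MvPolynomial (Fin 3) ℝ :=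
  (X 2 - X 0 ^ 2 * X 1) ^ 2 - 1 + C ε

/-- Lift a polynomial in `ℝ[x]` to `ℝ[x, ν]`. -/
def eliftX (p : MvPolynomial (Fin 3) ℝ) : EPoly := rename Sum.inl p

/-- The variable `ν_j`. -/
def enu (j : Fin 3) : EPoly := X (Sum.inr j)

/-- `F_k = ∂f/∂x_k − Σ_j ν_j ∂h_j/∂x_k`. -/
def eF (ε : ℝ) (k : Fin 3) : EPoly :=
  eliftX (pderiv k (ef ε)) - ∑ j, enu j * eliftX (pderiv k (eh j))

/-- The KKT ideal `I_KKT = ⟨F_1, F_2, F_3, ν_1 h_1, ν_2 h_2, ν_3 h_3⟩ ⊆ ℝ[x, ν]`. -/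
def eI (ε : ℝ) : Ideal EPoly :=
  Ideal.span (Set.range (eF ε) ∪ Set.range (fun j => enu j * eliftX (eh j)))

/-- The linear cone `M_KKT = {σ_0 + Σ_j σ_j h_j : σ_i SOS} + I_KKT`. -/
def eM (ε : ℝ) : Set EPoly :=
  {p | ∃ (σ0 : EPoly) (σ : Fin 3 → EPoly),
    IsSOS σ0 ∧ (∀ j, IsSOS (σ j)) ∧
    ∃ q ∈ eI ε, p = σ0 + (∑ j, σ j * eliftX (eh j)) + q}

/-!
Substituting `x = (a, b, a²b)` and `ν = 0` kills `I_KKT` (each `F_k` is a multiple of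
`x₃ - x₁²x₂` modulo the `ν_j`), sends `f` to the negative constant `ε - 1` and the constraints to
`1 - a²`, `b` and `(a² - 1)b - 1`. A certificate for `f ∈ M_KKT` would therefore give polynomials
`s₀, …, s₃ ≥ 0` on `ℝ²` with `s₀ + s₁(1 - a²) + s₂b + s₃((a² - 1)b - 1) = ε - 1`.
Write the left side as `A + bB - s₃` with `A = s₀ + (1 - a²)s₁`, `B = s₂ + (a² - 1)s₃`, and compare
degrees in `b`. Leading coefficients of nonnegative polynomials are nonnegative, and `1 - a²`,
`a² - 1` are positive on open intervals, so the top terms of `A` and `B` cannot cancel: `deg A` and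
`deg B` are even (as degrees of nonnegative polynomials) and `deg s₃ ≤ deg B`. Hence the left side
has degree `max (deg A) (deg B + 1) > 0`, unless `B = 0`; then `s₃ = 0`, and evaluating at
the origin gives `0 ≤ s₀(0,0) + s₁(0,0) = ε - 1`.
-/

open scoped Polynomial.Bivariate

namespace Polynomial

theorem leadingCoeff_nonneg_of_forall_eval_nonneg {p : ℝ[X]} (hp : ∀ x, 0 ≤ p.eval x) :
    0 ≤ p.leadingCoeff := by
  by_contra! hlc
  have hdeg : 0 < p.degree := by
    refine natDegree_pos_iff_degree_pos.mp (Nat.pos_of_ne_zero fun hd => ?_)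
    rw [leadingCoeff, hd, coeff_zero_eq_eval_zero] at hlc
    exact (hp 0).not_gt hlc
  obtain ⟨x, hx⟩ :=
    ((p.tendsto_atBot_of_leadingCoeff_nonpos hdeg hlc.le).eventually_lt_atBot 0).exists
  exact (hp x).not_gt hx

theorem even_natDegree_of_forall_eval_nonneg {p : ℝ[X]} (hp : ∀ x, 0 ≤ p.eval x) :
    Even p.natDegree := by
  have hcomp : ∀ x, 0 ≤ (p.comp (-X)).eval x := fun x => by simpa using hp (-x)
  have hlc : (p.comp (-X)).leadingCoeff = (-1) ^ p.natDegree * p.leadingCoeff := by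
    rw [leadingCoeff_comp (by simp)]
    simp [mul_comm]
  refine (Nat.even_or_odd _).resolve_right fun hodd => ?_
  have h := leadingCoeff_nonneg_of_forall_eval_nonneg hcomp
  rw [hlc, hodd.neg_one_pow, neg_one_mul, neg_nonneg] at h
  have hp0 : p = 0 :=
    leadingCoeff_eq_zero.mp (h.antisymm (leadingCoeff_nonneg_of_forall_eval_nonneg hp))
  simp [hp0] at hodd

theorem eq_zero_and_eq_zero_of_add_mul_eq_zero {K : Type*} [Field K] [LinearOrder K]
    [IsStrictOrderedRing K] {p q w : K[X]} {s : Set K} (hs : s.Infinite)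
    (hw : ∀ x ∈ s, 0 < w.eval x) (hp : ∀ x ∈ s, 0 ≤ p.eval x) (hq : ∀ x ∈ s, 0 ≤ q.eval x) (h : p + q * w = 0) :
    p = 0 ∧ q = 0 := by
  have hvanish : ∀ x ∈ s, p.eval x = 0 ∧ q.eval x = 0 := fun x hx => by
    have hx' : p.eval x + q.eval x * w.eval x = 0 := by simpa using congrArg (eval x) h
    have hqw := mul_nonneg (hq x hx) (hw x hx).le
    exact ⟨by linarith [hp x hx], (mul_eq_zero.mp (by linarith [hp x hx])).resolve_right
      (hw x hx).ne'⟩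
  exact ⟨eq_zero_of_infinite_isRoot p (hs.mono fun x hx => (hvanish x hx).1),
    eq_zero_of_infinite_isRoot q (hs.mono fun x hx => (hvanish x hx).2)⟩

variable {P Q : ℝ[X][Y]}

theorem coeff_eval_nonneg_of_natDegree_le (hP : ∀ x y, 0 ≤ P.evalEval x y) {n : ℕ}
    (hn : P.natDegree ≤ n) (x : ℝ) : 0 ≤ (P.coeff n).eval x := by
  set p : ℝ[X] := P.map (evalRingHom x)
  have hcoeff : p.coeff n = (P.coeff n).eval x := by rw [coeff_map, coe_evalRingHom]
  have hdeg : p.natDegree ≤ n := natDegree_map_le.trans hn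
  rcases hdeg.lt_or_eq with hlt | heq
  · rw [← hcoeff, coeff_eq_zero_of_natDegree_lt hlt]
  · rw [← hcoeff, ← heq]
    exact leadingCoeff_nonneg_of_forall_eval_nonneg fun y => by
      simpa [p, map_evalRingHom_eval] using hP x y

theorem even_natDegree_of_forall_evalEval_nonneg (hP : ∀ x y, 0 ≤ P.evalEval x y) :
    Even P.natDegree := by
  rcases eq_or_ne P 0 with rfl | hP0
  · simp
  obtain ⟨x, hx⟩ : ∃ x, P.leadingCoeff.eval x ≠ 0 := by
    by_contra! h
    exact leadingCoeff_ne_zero.mpr hP0 (zero_of_eval_zero _ h)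
  have hdeg : (P.map (evalRingHom x)).natDegree = P.natDegree :=
    natDegree_map_of_leadingCoeff_ne_zero _ hx
  rw [← hdeg]
  exact even_natDegree_of_forall_eval_nonneg fun y => by
    simpa [map_evalRingHom_eval] using hP x y

variable {w : ℝ[X]} {s : Set ℝ}

theorem coeff_eq_zero_of_coeff_add_mul_C_eq_zero (hs : s.Infinite) (hw : ∀ x ∈ s, 0 < w.eval x)
    (hP : ∀ x y, 0 ≤ P.evalEval x y) (hQ : ∀ x y, 0 ≤ Q.evalEval x y) {n : ℕ}
    (hPn : P.natDegree ≤ n) (hQn : Q.natDegree ≤ n) (h : (P + Q * C w).coeff n = 0) :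
    P.coeff n = 0 ∧ Q.coeff n = 0 := by
  rw [coeff_add, coeff_mul_C] at h
  exact eq_zero_and_eq_zero_of_add_mul_eq_zero hs hw
    (fun x _ => coeff_eval_nonneg_of_natDegree_le hP hPn x)
    (fun x _ => coeff_eval_nonneg_of_natDegree_le hQ hQn x) h

theorem natDegree_add_mul_C_of_nonneg (hs : s.Infinite) (hw : ∀ x ∈ s, 0 < w.eval x)
    (hP : ∀ x y, 0 ≤ P.evalEval x y) (hQ : ∀ x y, 0 ≤ Q.evalEval x y) :
    (P + Q * C w).natDegree = max P.natDegree Q.natDegree := by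
  refine ((natDegree_add_le _ _).trans (max_le_max le_rfl (natDegree_mul_C_le _ _))).antisymm ?_
  by_cases hn : (P + Q * C w).coeff (max P.natDegree Q.natDegree) = 0
  · obtain ⟨hPn, hQn⟩ :=
      coeff_eq_zero_of_coeff_add_mul_C_eq_zero hs hw hP hQ (le_max_left ..) (le_max_right ..) hn
    suffices max P.natDegree Q.natDegree = 0 by simp [this]
    rcases max_choice P.natDegree Q.natDegree with h | h
    · rw [h, ← leadingCoeff, leadingCoeff_eq_zero] at hPn
      rw [h, hPn, natDegree_zero]
    · rw [h, ← leadingCoeff, leadingCoeff_eq_zero] at hQn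
      rw [h, hQn, natDegree_zero]
  · exact le_natDegree_of_ne_zero hn

theorem even_natDegree_add_mul_C_of_nonneg (hs : s.Infinite) (hw : ∀ x ∈ s, 0 < w.eval x)
    (hP : ∀ x y, 0 ≤ P.evalEval x y) (hQ : ∀ x y, 0 ≤ Q.evalEval x y) :
    Even (P + Q * C w).natDegree :=
  natDegree_add_mul_C_of_nonneg hs hw hP hQ ▸ max_rec' _
    (even_natDegree_of_forall_evalEval_nonneg hP) (even_natDegree_of_forall_evalEval_nonneg hQ)

theorem eq_zero_of_add_mul_C_eq_zero (hs : s.Infinite) (hw : ∀ x ∈ s, 0 < w.eval x)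
    (hP : ∀ x y, 0 ≤ P.evalEval x y) (hQ : ∀ x y, 0 ≤ Q.evalEval x y) (h : P + Q * C w = 0) :
    Q = 0 := by
  have hdeg := natDegree_add_mul_C_of_nonneg hs hw hP hQ
  rw [h, natDegree_zero, eq_comm, Nat.max_eq_zero_iff] at hdeg
  have h0 := (coeff_eq_zero_of_coeff_add_mul_C_eq_zero hs hw hP hQ hdeg.1.le hdeg.2.le
    (by rw [h, coeff_zero])).2
  rw [eq_C_of_natDegree_eq_zero hdeg.2, h0, C_0]

theorem add_mul_ne_CC_of_nonneg {s₀ s₁ s₂ s₃ : ℝ[X][Y]} {r : ℝ} (hr : r < 0)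
    (h₀ : ∀ x y, 0 ≤ s₀.evalEval x y) (h₁ : ∀ x y, 0 ≤ s₁.evalEval x y)
    (h₂ : ∀ x y, 0 ≤ s₂.evalEval x y) (h₃ : ∀ x y, 0 ≤ s₃.evalEval x y) :
    s₀ + s₁ * C (1 - X ^ 2) + s₂ * Y + s₃ * (C (X ^ 2 - 1) * Y - 1) ≠ CC r := by
  intro h
  set A := s₀ + s₁ * C (1 - X ^ 2)
  set B := s₂ + s₃ * C (X ^ 2 - 1)
  have hw : ∀ x ∈ Set.Ioi (1 : ℝ), 0 < (X ^ 2 - 1 : ℝ[X]).eval x := fun x hx => by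
    simp only [eval_sub, eval_one, eval_pow, eval_X]; nlinarith [Set.mem_Ioi.mp hx]
  have hB : B.natDegree = max s₂.natDegree s₃.natDegree :=
    natDegree_add_mul_C_of_nonneg (Set.Ioi_infinite 1) hw h₂ h₃
  have hsum : A + Y * B - s₃ = CC r := by rw [← h]; ring
  by_cases hB0 : B = 0
  · have hs₃ : s₃ = 0 := eq_zero_of_add_mul_C_eq_zero (Set.Ioi_infinite 1) hw h₂ h₃ hB0
    rw [hB0, hs₃, mul_zero, add_zero, sub_zero] at hsum
    have h00 := congrArg (evalEval 0 0) hsum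
    simp only [A, evalEval_add, evalEval_mul, evalEval_C, eval_sub, eval_one,
      eval_pow, eval_X] at h00
    norm_num at h00
    linarith [h₀ 0 0, h₁ 0 0]
  obtain ⟨a, ha⟩ : Even A.natDegree :=
    even_natDegree_add_mul_C_of_nonneg (Set.Ioo_infinite (by norm_num : (-1 : ℝ) < 1))
      (fun x hx => by
        simp only [eval_sub, eval_one, eval_pow, eval_X]; nlinarith [hx.1, hx.2]) h₀ h₁
  obtain ⟨b, hb⟩ : Even B.natDegree :=
    even_natDegree_add_mul_C_of_nonneg (Set.Ioi_infinite 1) hw h₂ h₃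
  have hYB : (Y * B).natDegree = B.natDegree + 1 := natDegree_X_mul hB0
  have hdeg : B.natDegree + 1 ≤ (A + Y * B).natDegree := by
    rcases lt_or_gt_of_ne (show A.natDegree ≠ (Y * B).natDegree by omega) with hlt | hgt
    · rw [natDegree_add_eq_right_of_natDegree_lt hlt, hYB]
    · rw [natDegree_add_eq_left_of_natDegree_lt hgt]; omega
  have hs₃ : s₃.natDegree < (A + Y * B).natDegree := by omega
  rw [← natDegree_sub_eq_left_of_natDegree_lt hs₃, hsum, natDegree_C] at hdeg
  omega

end Polynomial

theorem IsSOS.nonneg {σ : Type*} {p : MvPolynomial σ ℝ} (hp : IsSOS p)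
    (φ : MvPolynomial σ ℝ →+* ℝ) : 0 ≤ φ p := by
  obtain ⟨m, q, rfl⟩ := hp
  simpa only [map_sum, map_pow] using Finset.sum_nonneg fun i _ => sq_nonneg (φ (q i))

def kktPoint : Fin 3 → ℝ[X][Y] :=
  ![Polynomial.C Polynomial.X, Y, Polynomial.C (Polynomial.X ^ 2) * Y]

def kktParam : EPoly →ₐ[ℝ] ℝ[X][Y] :=
  aeval (Sum.elim kktPoint 0)

theorem kktParam_eliftX (p : MvPolynomial (Fin 3) ℝ) :
    kktParam (eliftX p) = aeval kktPoint p := by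
  rw [kktParam, eliftX, aeval_rename, Sum.elim_comp_inl]

theorem kktParam_enu (j : Fin 3) : kktParam (enu j) = 0 := by
  rw [kktParam, enu, aeval_X, Sum.elim_inr, Pi.zero_apply]

theorem kktParam_ef (ε : ℝ) : kktParam (eliftX (ef ε)) = Polynomial.CC (ε - 1) := by
  simp only [kktParam_eliftX, ef, kktPoint, map_add, map_sub, map_mul, map_pow, map_one, aeval_X,
    aeval_C, Polynomial.coe_algebraMap_eq_CC, Matrix.cons_val_zero, Matrix.cons_val_one,
    Matrix.cons_val_two, Matrix.head_cons, Matrix.tail_cons, Polynomial.CC]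
  ring

theorem kktParam_sum_mul_eh (σ : Fin 3 → EPoly) :
    kktParam (∑ j, σ j * eliftX (eh j)) =
      kktParam (σ 0) * Polynomial.C (1 - Polynomial.X ^ 2) + kktParam (σ 1) * Y
        + kktParam (σ 2) * (Polynomial.C (Polynomial.X ^ 2 - 1) * Y - 1) := by
  simp only [Fin.sum_univ_three, map_add, map_mul, kktParam_eliftX, eh, kktPoint, map_sub,
    map_pow, map_one, aeval_X, Matrix.cons_val_zero, Matrix.cons_val_one, Matrix.cons_val_two,
    Matrix.head_cons, Matrix.tail_cons]
  ring

theorem aeval_kktPoint_X_two_sub :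
    aeval kktPoint (X 2 - X 0 ^ 2 * X 1 : MvPolynomial (Fin 3) ℝ) = 0 := by
  simp only [kktPoint, map_sub, map_mul, map_pow, aeval_X, Matrix.cons_val_zero,
    Matrix.cons_val_one, Matrix.cons_val_two, Matrix.head_cons, Matrix.tail_cons]
  ring

theorem pderiv_ef (ε : ℝ) (k : Fin 3) :
    pderiv k (ef ε) = 2 * (X 2 - X 0 ^ 2 * X 1) * pderiv k (X 2 - X 0 ^ 2 * X 1) := by
  rw [ef, map_add, map_sub, pderiv_C, pderiv_one, pderiv_pow]
  push_cast
  ring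

theorem kktParam_eF (ε : ℝ) (k : Fin 3) : kktParam (eF ε k) = 0 := by
  simp only [eF, map_sub, map_sum, map_mul, kktParam_enu, zero_mul, Finset.sum_const_zero,
    sub_zero]
  rw [kktParam_eliftX, pderiv_ef, map_mul, map_mul, aeval_kktPoint_X_two_sub, mul_zero, zero_mul]

theorem eI_le_ker_kktParam (ε : ℝ) : eI ε ≤ RingHom.ker kktParam := by
  rw [eI, Ideal.span_le]
  rintro p (⟨k, rfl⟩ | ⟨j, rfl⟩)
  · exact kktParam_eF ε k
  · exact (map_mul kktParam _ _).trans (by rw [kktParam_enu, zero_mul])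

theorem stmt9_general (ε : ℝ) (hε1 : ε < 1) :
    eliftX (ef ε) ∉ eM ε := by
  rintro ⟨σ₀, σ, hσ₀, hσ, q, hq, hf⟩
  have hnonneg {p : EPoly} (hp : IsSOS p) (x y : ℝ) : 0 ≤ (kktParam p).evalEval x y :=
    hp.nonneg ((Polynomial.evalEvalRingHom x y).comp kktParam.toRingHom)
  refine Polynomial.add_mul_ne_CC_of_nonneg (sub_neg.mpr hε1) (hnonneg hσ₀) (hnonneg (hσ 0))
    (hnonneg (hσ 1)) (hnonneg (hσ 2)) ?_
  have hq0 : kktParam q = 0 := eI_le_ker_kktParam ε hq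
  have hf' := congrArg kktParam hf
  rw [map_add, map_add, kktParam_sum_mul_eh, hq0, add_zero, kktParam_ef] at hf'
  rw [hf']
  ring

/-- For `0 < ε < 1` and `f = (x_3 − x_1² x_2)² − 1 + ε`, with the
constraints `h_1 = 1 − x_1² ≥ 0`, `h_2 = x_2 ≥ 0`, `h_3 = x_3 − x_2 − 1 ≥ 0`, the
polynomial `f` does not belong to the linear cone `M_KKT`: there exist no SOS
`σ_0, …, σ_3` and no element `q` of `I_KKT` with `f = σ_0 + Σ_j σ_j h_j + q`. -/
theorem stmt9 (ε : ℝ) (hε0 : 0 < ε) (hε1 : ε < 1) :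
    eliftX (ef ε) ∉ eM ε :=
  stmt9_general ε hε1

end
end

section
/- Let V_1, …, V_r be pairwise disjoint subsets of ℂ^m, each of which is the common zero set of an ideal of ℝ[X_1, …, X_m] (in particular each V_ℓ is conjugate symmetric: z ∈ V_ℓ if and only if its componentwise complex conjugate z̄ ∈ V_ℓ). Then there exist polynomials p_1, …, p_r ∈ ℝ[X_1, …, X_m] such that p_i(u) = δ_{ij} (the Kronecker delta) for all i, j ∈ {1, …, r} and all u ∈ V_j. -/
/-!
Two real varieties that do not meet in `ℂ^m` come from comaximal ideals: by Hilbert's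
Nullstellensatz over `ℂ`, the ideal `I ⊔ J` of real polynomials has no complex zero, hence its
radical, and so the ideal itself, is everything. The Chinese remainder theorem for the pairwise
comaximal ideals `I_1, …, I_r` then provides `p_i` with `p_i - δ_{ij} ∈ I_j`, and such a `p_i`
takes the value `δ_{ij}` on the zero set of `I_j`.
-/

open Function MvPolynomial

namespace MvPolynomial

variable {k K σ : Type*} [Field k] [Field K] [Algebra k K]

theorem eq_top_of_zeroLocus_eq_empty [IsAlgClosed K] [Finite σ] {I : Ideal (MvPolynomial σ k)}
    (h : zeroLocus K I = ∅) : I = ⊤ := by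
  rw [← Ideal.radical_eq_top, ← vanishingIdeal_zeroLocus_eq_radical (K := K), h,
    vanishingIdeal_empty]

theorem isCoprime_of_disjoint_zeroLocus [IsAlgClosed K] [Finite σ]
    {I J : Ideal (MvPolynomial σ k)} (h : Disjoint (zeroLocus K I) (zeroLocus K J)) :
    IsCoprime I J := by
  rw [Ideal.isCoprime_iff_sup_eq]
  apply eq_top_of_zeroLocus_eq_empty (K := K)
  exact disjoint_self.mp <|
    h.mono (zeroLocus_anti_mono le_sup_left) (zeroLocus_anti_mono le_sup_right)

theorem exists_aeval_eq_ite_of_pairwise_isCoprime {ι : Type*} [Finite ι] [DecidableEq ι]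
    {I : ι → Ideal (MvPolynomial σ k)} (hI : Pairwise (IsCoprime on I)) :
    ∃ p : ι → MvPolynomial σ k,
      ∀ i j, ∀ u ∈ zeroLocus K (I j), aeval u (p i) = if i = j then 1 else 0 := by
  choose p hp using fun i ↦ Ideal.exists_forall_sub_mem_ideal hI fun j ↦ if i = j then 1 else 0
  refine ⟨p, fun i j u hu ↦ ?_⟩
  have hsub := hu _ (hp i j)
  rw [map_sub, sub_eq_zero] at hsub
  rw [hsub]
  split_ifs <;> simp

theorem exists_aeval_eq_ite_of_pairwise_disjoint_zeroLocus [IsAlgClosed K] [Finite σ]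
    {ι : Type*} [Finite ι] [DecidableEq ι] {I : ι → Ideal (MvPolynomial σ k)}
    (hI : Pairwise (Disjoint on fun i ↦ zeroLocus K (I i))) :
    ∃ p : ι → MvPolynomial σ k,
      ∀ i j, ∀ u ∈ zeroLocus K (I j), aeval u (p i) = if i = j then 1 else 0 :=
  exists_aeval_eq_ite_of_pairwise_isCoprime fun _ _ hij ↦ isCoprime_of_disjoint_zeroLocus (hI hij)

end MvPolynomial

/-- Let `V_1, …, V_r` be pairwise disjoint subsets of `ℂ^m`, each the
common zero set of an ideal of `ℝ[X_1, …, X_m]`.  Then there exist polynomials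
`p_1, …, p_r ∈ ℝ[X_1, …, X_m]` such that `p_i(u) = δ_{ij}` for all `u ∈ V_j`. -/
theorem stmt14 (m r : ℕ) (V : Fin r → Set (Fin m → ℂ))
    (hvariety : ∀ ℓ, ∃ I : Ideal (MvPolynomial (Fin m) ℝ),
      V ℓ = {u : Fin m → ℂ | ∀ p ∈ I, aeval u p = 0})
    (hdisj : ∀ i j, i ≠ j → Disjoint (V i) (V j)) :
    ∃ p : Fin r → MvPolynomial (Fin m) ℝ,
      ∀ i j, ∀ u ∈ V j, aeval u (p i) = if i = j then 1 else 0 := by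
  choose I hI using hvariety
  obtain rfl : V = fun ℓ ↦ zeroLocus ℂ (I ℓ) := funext hI
  exact exists_aeval_eq_ite_of_pairwise_disjoint_zeroLocus fun i j hij ↦ hdisj i j hij
end

section
/- Let f, g_1, …, g_s ∈ ℝ[x_1, …, x_n] and γ ∈ ℝ. Then f − γ belongs to the linear cone M_KKT ⊆ ℝ[x, λ, ν] (built from the orthant constraints h_k = x_k, k = 1, …, n) if and only if f − γ belongs to the reduced linear cone M^{ℝ^n_+}_KKT ⊆ ℝ[x, λ]. Equivalently, f − γ ∈ M_{N_1,KKT} for some N_1 ∈ ℕ if and only if f − γ ∈ M^{ℝ^n_+}_{N_2,KKT} for some N_2 ∈ ℕ, so the reduced SOS relaxations have the same convergence properties as the full ones. -/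
open MvPolynomial

noncomputable section

/-- Variables `x_1,…,x_n, λ_1,…,λ_s, ν_1,…,ν_n` of the full KKT formulation for the
orthant constraints `h_k = x_k`. -/
abbrev AVar (n s : ℕ) := Sum (Fin n) (Sum (Fin s) (Fin n))

/-- The full ring `ℝ[x, λ, ν]`. -/
abbrev APoly (n s : ℕ) := MvPolynomial (AVar n s) ℝ

/-- Variables `x_1,…,x_n, λ_1,…,λ_s` of the reduced formulation. -/
abbrev BVar (n s : ℕ) := Sum (Fin n) (Fin s)

/-- The reduced ring `ℝ[x, λ]`. -/
abbrev BPoly (n s : ℕ) := MvPolynomial (BVar n s) ℝ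

/-- Lift `ℝ[x]` into `ℝ[x, λ, ν]`. -/
def liftA (n s : ℕ) (p : MvPolynomial (Fin n) ℝ) : APoly n s := rename Sum.inl p

/-- Lift `ℝ[x]` into `ℝ[x, λ]`. -/
def liftB (n s : ℕ) (p : MvPolynomial (Fin n) ℝ) : BPoly n s := rename Sum.inl p

/-- `F_k = ∂f/∂x_k + Σ_i λ_i ∂g_i/∂x_k − ν_k`. -/
def FA (n s : ℕ) (f : MvPolynomial (Fin n) ℝ) (g : Fin s → MvPolynomial (Fin n) ℝ)
    (k : Fin n) : APoly n s :=
  liftA n s (pderiv k f)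
    + ∑ i, X (Sum.inr (Sum.inl i)) * liftA n s (pderiv k (g i))
    - X (Sum.inr (Sum.inr k))

/-- The full KKT ideal `I_KKT = ⟨F_1,…,F_n, g_1,…,g_s, ν_1 x_1,…,ν_n x_n⟩`. -/
def IA (n s : ℕ) (f : MvPolynomial (Fin n) ℝ) (g : Fin s → MvPolynomial (Fin n) ℝ) :
    Ideal (APoly n s) :=
  Ideal.span (Set.range (FA n s f g) ∪ Set.range (fun i => liftA n s (g i))
    ∪ Set.range (fun k : Fin n =>
        (X (Sum.inr (Sum.inr k)) : APoly n s) * X (Sum.inl k)))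

/-- The full linear cone `M_KKT = {σ_0 + Σ_k σ_k x_k : σ's SOS} + I_KKT`. -/
def MA (n s : ℕ) (f : MvPolynomial (Fin n) ℝ) (g : Fin s → MvPolynomial (Fin n) ℝ) :
    Set (APoly n s) :=
  {p | ∃ (σ0 : APoly n s) (σ : Fin n → APoly n s),
    IsSOS σ0 ∧ (∀ k, IsSOS (σ k)) ∧
    ∃ q ∈ IA n s f g, p = σ0 + (∑ k, σ k * X (Sum.inl k)) + q}

/-- The truncated full KKT ideal `I_{N,KKT}`. -/
def IATrunc (n s : ℕ) (f : MvPolynomial (Fin n) ℝ) (g : Fin s → MvPolynomial (Fin n) ℝ)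
    (N : ℕ) : Set (APoly n s) :=
  {p | ∃ (φ : Fin n → APoly n s) (ψ : Fin s → APoly n s) (χ : Fin n → APoly n s),
    (∀ k, (φ k * FA n s f g k).totalDegree ≤ N) ∧
    (∀ i, (ψ i * liftA n s (g i)).totalDegree ≤ N) ∧
    (∀ k, (χ k * ((X (Sum.inr (Sum.inr k)) : APoly n s) * X (Sum.inl k))).totalDegree
      ≤ N) ∧
    p = (∑ k, φ k * FA n s f g k) + (∑ i, ψ i * liftA n s (g i))
      + (∑ k, χ k * ((X (Sum.inr (Sum.inr k)) : APoly n s) * X (Sum.inl k)))}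

/-- The truncated full linear cone `M_{N,KKT}`. -/
def MATrunc (n s : ℕ) (f : MvPolynomial (Fin n) ℝ) (g : Fin s → MvPolynomial (Fin n) ℝ)
    (N : ℕ) : Set (APoly n s) :=
  {p | ∃ (σ0 : APoly n s) (σ : Fin n → APoly n s),
    IsSOS σ0 ∧ (∀ k, IsSOS (σ k)) ∧
    σ0.totalDegree ≤ N ∧
    (∀ k, (σ k * (X (Sum.inl k) : APoly n s)).totalDegree ≤ N) ∧
    ∃ q ∈ IATrunc n s f g N, p = σ0 + (∑ k, σ k * X (Sum.inl k)) + q}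

/-- The generators `x_k (∂f/∂x_k + Σ_i λ_i ∂g_i/∂x_k)` of the reduced KKT ideal. -/
def GB (n s : ℕ) (f : MvPolynomial (Fin n) ℝ) (g : Fin s → MvPolynomial (Fin n) ℝ)
    (k : Fin n) : BPoly n s :=
  X (Sum.inl k) *
    (liftB n s (pderiv k f) + ∑ i, X (Sum.inr i) * liftB n s (pderiv k (g i)))

/-- The reduced KKT ideal `I^{ℝ^n_+}_KKT ⊆ ℝ[x, λ]`. -/
def IB (n s : ℕ) (f : MvPolynomial (Fin n) ℝ) (g : Fin s → MvPolynomial (Fin n) ℝ) :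
    Ideal (BPoly n s) :=
  Ideal.span (Set.range (GB n s f g) ∪ Set.range (fun i => liftB n s (g i)))

/-- The reduced linear cone `M^{ℝ^n_+}_KKT = {σ_0 + Σ_k σ_k x_k : σ's SOS} + I^{ℝ^n_+}_KKT`. -/
def MB (n s : ℕ) (f : MvPolynomial (Fin n) ℝ) (g : Fin s → MvPolynomial (Fin n) ℝ) :
    Set (BPoly n s) :=
  {p | ∃ (σ0 : BPoly n s) (σ : Fin n → BPoly n s),
    IsSOS σ0 ∧ (∀ k, IsSOS (σ k)) ∧
    ∃ q ∈ IB n s f g, p = σ0 + (∑ k, σ k * X (Sum.inl k)) + q}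

/-- The truncated reduced KKT ideal `I^{ℝ^n_+}_{N,KKT}`. -/
def IBTrunc (n s : ℕ) (f : MvPolynomial (Fin n) ℝ) (g : Fin s → MvPolynomial (Fin n) ℝ)
    (N : ℕ) : Set (BPoly n s) :=
  {p | ∃ (φ : Fin n → BPoly n s) (ψ : Fin s → BPoly n s),
    (∀ k, (φ k * GB n s f g k).totalDegree ≤ N) ∧
    (∀ i, (ψ i * liftB n s (g i)).totalDegree ≤ N) ∧
    p = (∑ k, φ k * GB n s f g k) + (∑ i, ψ i * liftB n s (g i))}

/-- The truncated reduced linear cone `M^{ℝ^n_+}_{N,KKT}`. -/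
def MBTrunc (n s : ℕ) (f : MvPolynomial (Fin n) ℝ) (g : Fin s → MvPolynomial (Fin n) ℝ)
    (N : ℕ) : Set (BPoly n s) :=
  {p | ∃ (σ0 : BPoly n s) (σ : Fin n → BPoly n s),
    IsSOS σ0 ∧ (∀ k, IsSOS (σ k)) ∧
    σ0.totalDegree ≤ N ∧
    (∀ k, (σ k * (X (Sum.inl k) : BPoly n s)).totalDegree ≤ N) ∧
    ∃ q ∈ IBTrunc n s f g N, p = σ0 + (∑ k, σ k * X (Sum.inl k)) + q}

/-! The multipliers `ν_k` of the full formulation are redundant: the generator `F_k` of `I_KKT`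
says exactly that `ν_k = ∂_k L := ∂f/∂x_k + Σ_i λ_i ∂g_i/∂x_k`. Substituting `ν_k ↦ ∂_k L` is an
`ℝ`-algebra map `ℝ[x, λ, ν] → ℝ[x, λ]` killing `F_k` and sending `ν_k x_k` to `x_k ∂_k L`, so it
maps `I_KKT` into the reduced ideal; conversely the inclusion `ℝ[x, λ] → ℝ[x, λ, ν]` maps the
reduced ideal into `I_KKT` because `x_k ∂_k L = x_k F_k + ν_k x_k`. Both maps fix the `x_k`, the
polynomials of `ℝ[x]`, and send sums of squares to sums of squares, so they carry each cone into
the other. The truncated cones exhaust the untruncated ones since every certificate has finitely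
many summands. -/

theorem IsSOS.map {σ τ F : Type*} [FunLike F (MvPolynomial σ ℝ) (MvPolynomial τ ℝ)]
    [RingHomClass F (MvPolynomial σ ℝ) (MvPolynomial τ ℝ)] (φ : F) {p : MvPolynomial σ ℝ}
    (hp : IsSOS p) : IsSOS (φ p) := by
  obtain ⟨m, q, rfl⟩ := hp
  exact ⟨m, fun i => φ (q i), by simp only [map_sum, map_pow]⟩

namespace KKTOrthant

variable {n s : ℕ} (f : MvPolynomial (Fin n) ℝ) (g : Fin s → MvPolynomial (Fin n) ℝ)

def gradLagrangian (k : Fin n) : BPoly n s :=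
  liftB n s (pderiv k f) + ∑ i, X (Sum.inr i) * liftB n s (pderiv k (g i))

theorem GB_eq (k : Fin n) : GB n s f g k = X (Sum.inl k) * gradLagrangian f g k := rfl

def eliminateNu : APoly n s →ₐ[ℝ] BPoly n s :=
  aeval (Sum.elim (X ∘ Sum.inl) (Sum.elim (X ∘ Sum.inr) (gradLagrangian f g)))

def embedReduced : BPoly n s →ₐ[ℝ] APoly n s := rename (Sum.map id Sum.inl)

theorem eliminateNu_liftA (p : MvPolynomial (Fin n) ℝ) :
    eliminateNu f g (liftA n s p) = liftB n s p := by
  rw [liftA, liftB, eliminateNu, aeval_rename, Sum.elim_comp_inl, rename_eq_aeval]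

theorem eliminateNu_X (v : AVar n s) :
    eliminateNu f g (X v) =
      Sum.elim (X ∘ Sum.inl) (Sum.elim (X ∘ Sum.inr) (gradLagrangian f g)) v :=
  aeval_X _ _

theorem eliminateNu_X_inl (k : Fin n) :
    eliminateNu f g (X (Sum.inl k)) = X (Sum.inl k) :=
  eliminateNu_X f g _

theorem eliminateNu_FA (k : Fin n) : eliminateNu f g (FA n s f g k) = 0 := by
  simp only [FA, map_sub, map_add, map_sum, map_mul, eliminateNu_liftA, eliminateNu_X,
    Sum.elim_inl, Sum.elim_inr, Function.comp_apply, gradLagrangian, sub_self]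

theorem eliminateNu_nu_mul_x (k : Fin n) :
    eliminateNu f g ((X (Sum.inr (Sum.inr k)) : APoly n s) * X (Sum.inl k)) = GB n s f g k := by
  rw [map_mul, eliminateNu_X_inl, eliminateNu_X, GB_eq, mul_comm]
  rfl

theorem map_IA_le_IB : (IA n s f g).map (eliminateNu f g) ≤ IB n s f g := by
  rw [IA, Ideal.map_span, Ideal.span_le]
  rintro _ ⟨p, (⟨k, rfl⟩ | ⟨i, rfl⟩) | ⟨k, rfl⟩, rfl⟩
  · rw [SetLike.mem_coe, eliminateNu_FA]
    exact zero_mem _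
  · rw [SetLike.mem_coe, eliminateNu_liftA]
    exact Ideal.subset_span (Or.inr ⟨i, rfl⟩)
  · rw [SetLike.mem_coe, eliminateNu_nu_mul_x]
    exact Ideal.subset_span (Or.inl ⟨k, rfl⟩)

theorem embedReduced_liftB (p : MvPolynomial (Fin n) ℝ) :
    embedReduced (liftB n s p) = liftA n s p := by
  rw [liftB, embedReduced, rename_rename]
  rfl

theorem embedReduced_X (v : BVar n s) :
    embedReduced (X v) = (X (Sum.map id Sum.inl v) : APoly n s) :=
  rename_X _ _

theorem embedReduced_GB (k : Fin n) :
    embedReduced (GB n s f g k) =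
      X (Sum.inl k) * FA n s f g k + (X (Sum.inr (Sum.inr k)) : APoly n s) * X (Sum.inl k) := by
  simp only [GB, FA, map_mul, map_add, map_sum, embedReduced_liftB, embedReduced_X,
    Sum.map_inl, Sum.map_inr, id]
  ring

theorem map_IB_le_IA : (IB n s f g).map embedReduced ≤ IA n s f g := by
  rw [IB, Ideal.map_span, Ideal.span_le]
  rintro _ ⟨p, ⟨k, rfl⟩ | ⟨i, rfl⟩, rfl⟩
  · rw [SetLike.mem_coe, embedReduced_GB]
    exact add_mem (Ideal.mul_mem_left _ _ (Ideal.subset_span (Or.inl (Or.inl ⟨k, rfl⟩))))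
      (Ideal.subset_span (Or.inr ⟨k, rfl⟩))
  · rw [SetLike.mem_coe, embedReduced_liftB]
    exact Ideal.subset_span (Or.inl (Or.inr ⟨i, rfl⟩))

theorem eliminateNu_mem_MB {P : APoly n s} (hP : P ∈ MA n s f g) :
    eliminateNu f g P ∈ MB n s f g := by
  obtain ⟨σ0, σ, h0, hσ, q, hq, rfl⟩ := hP
  refine ⟨eliminateNu f g σ0, fun k => eliminateNu f g (σ k), h0.map _, fun k => (hσ k).map _,
    eliminateNu f g q, map_IA_le_IB f g (Ideal.mem_map_of_mem _ hq), ?_⟩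
  simp only [map_add, map_sum, map_mul, eliminateNu_X_inl]

theorem embedReduced_mem_MA {P : BPoly n s} (hP : P ∈ MB n s f g) :
    embedReduced P ∈ MA n s f g := by
  obtain ⟨σ0, σ, h0, hσ, q, hq, rfl⟩ := hP
  refine ⟨embedReduced σ0, fun k => embedReduced (σ k), h0.map _, fun k => (hσ k).map _,
    embedReduced q, map_IB_le_IA f g (Ideal.mem_map_of_mem _ hq), ?_⟩
  simp only [map_add, map_sum, map_mul, embedReduced_X, Sum.map_inl, id]

theorem liftA_mem_MA_iff (p : MvPolynomial (Fin n) ℝ) :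
    liftA n s p ∈ MA n s f g ↔ liftB n s p ∈ MB n s f g :=
  ⟨fun h => eliminateNu_liftA f g p ▸ eliminateNu_mem_MB f g h,
    fun h => embedReduced_liftB p ▸ embedReduced_mem_MA f g h⟩

theorem mem_IA_iff {q : APoly n s} :
    q ∈ IA n s f g ↔ ∃ (φ : Fin n → APoly n s) (ψ : Fin s → APoly n s) (χ : Fin n → APoly n s),
      q = (∑ k, φ k * FA n s f g k) + (∑ i, ψ i * liftA n s (g i))
        + (∑ k, χ k * ((X (Sum.inr (Sum.inr k)) : APoly n s) * X (Sum.inl k))) := by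
  rw [IA, ← Set.Sum.elim_range, ← Set.Sum.elim_range, Ideal.mem_span_range_iff_exists_fun]
  constructor
  · rintro ⟨c, rfl⟩
    exact ⟨fun k => c (.inl (.inl k)), fun i => c (.inl (.inr i)), fun k => c (.inr k),
      by simp only [Fintype.sum_sum_type, Sum.elim_inl, Sum.elim_inr]⟩
  · rintro ⟨φ, ψ, χ, rfl⟩
    exact ⟨Sum.elim (Sum.elim φ ψ) χ,
      by simp only [Fintype.sum_sum_type, Sum.elim_inl, Sum.elim_inr]⟩

theorem mem_IB_iff {q : BPoly n s} :
    q ∈ IB n s f g ↔ ∃ (φ : Fin n → BPoly n s) (ψ : Fin s → BPoly n s),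
      q = (∑ k, φ k * GB n s f g k) + (∑ i, ψ i * liftB n s (g i)) := by
  rw [IB, ← Set.Sum.elim_range, Ideal.mem_span_range_iff_exists_fun]
  constructor
  · rintro ⟨c, rfl⟩
    exact ⟨fun k => c (.inl k), fun i => c (.inr i),
      by simp only [Fintype.sum_sum_type, Sum.elim_inl, Sum.elim_inr]⟩
  · rintro ⟨φ, ψ, rfl⟩
    exact ⟨Sum.elim φ ψ, by simp only [Fintype.sum_sum_type, Sum.elim_inl, Sum.elim_inr]⟩

theorem exists_mem_MATrunc_iff {P : APoly n s} :
    (∃ N, P ∈ MATrunc n s f g N) ↔ P ∈ MA n s f g := by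
  constructor
  · rintro ⟨N, σ0, σ, h0, hσ, -, -, q, ⟨φ, ψ, χ, -, -, -, hq⟩, rfl⟩
    exact ⟨σ0, σ, h0, hσ, q, (mem_IA_iff f g).2 ⟨φ, ψ, χ, hq⟩, rfl⟩
  · rintro ⟨σ0, σ, h0, hσ, q, hq, rfl⟩
    obtain ⟨φ, ψ, χ, hq⟩ := (mem_IA_iff f g).1 hq
    obtain ⟨N₁, h₁⟩ := Finite.exists_le fun k => (σ k * (X (Sum.inl k) : APoly n s)).totalDegree
    obtain ⟨N₂, h₂⟩ := Finite.exists_le fun k => (φ k * FA n s f g k).totalDegree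
    obtain ⟨N₃, h₃⟩ := Finite.exists_le fun i => (ψ i * liftA n s (g i)).totalDegree
    obtain ⟨N₄, h₄⟩ := Finite.exists_le fun k =>
      (χ k * ((X (Sum.inr (Sum.inr k)) : APoly n s) * X (Sum.inl k))).totalDegree
    refine ⟨σ0.totalDegree + N₁ + N₂ + N₃ + N₄, σ0, σ, h0, hσ, by omega,
      fun k => (h₁ k).trans (by omega), q,
      ⟨φ, ψ, χ, fun k => (h₂ k).trans (by omega), fun i => (h₃ i).trans (by omega),
        fun k => (h₄ k).trans (by omega), hq⟩, rfl⟩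

theorem exists_mem_MBTrunc_iff {P : BPoly n s} :
    (∃ N, P ∈ MBTrunc n s f g N) ↔ P ∈ MB n s f g := by
  constructor
  · rintro ⟨N, σ0, σ, h0, hσ, -, -, q, ⟨φ, ψ, -, -, hq⟩, rfl⟩
    exact ⟨σ0, σ, h0, hσ, q, (mem_IB_iff f g).2 ⟨φ, ψ, hq⟩, rfl⟩
  · rintro ⟨σ0, σ, h0, hσ, q, hq, rfl⟩
    obtain ⟨φ, ψ, hq⟩ := (mem_IB_iff f g).1 hq
    obtain ⟨N₁, h₁⟩ := Finite.exists_le fun k => (σ k * (X (Sum.inl k) : BPoly n s)).totalDegree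
    obtain ⟨N₂, h₂⟩ := Finite.exists_le fun k => (φ k * GB n s f g k).totalDegree
    obtain ⟨N₃, h₃⟩ := Finite.exists_le fun i => (ψ i * liftB n s (g i)).totalDegree
    refine ⟨σ0.totalDegree + N₁ + N₂ + N₃, σ0, σ, h0, hσ, by omega,
      fun k => (h₁ k).trans (by omega), q,
      ⟨φ, ψ, fun k => (h₂ k).trans (by omega), fun i => (h₃ i).trans (by omega), hq⟩, rfl⟩

end KKTOrthant

/-- For the orthant constraints `h_k = x_k`, the full and reduced
linear-cone SOS relaxations are equivalent: `f − γ ∈ M_KKT ⊆ ℝ[x,λ,ν]` if and only if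
`f − γ ∈ M^{ℝ^n_+}_KKT ⊆ ℝ[x,λ]`, and `f − γ ∈ M_{N₁,KKT}` for some `N₁` if and only if
`f − γ ∈ M^{ℝ^n_+}_{N₂,KKT}` for some `N₂`. -/
theorem stmt16 (n s : ℕ) (f : MvPolynomial (Fin n) ℝ)
    (g : Fin s → MvPolynomial (Fin n) ℝ) (γ : ℝ) :
    (liftA n s (f - C γ) ∈ MA n s f g ↔ liftB n s (f - C γ) ∈ MB n s f g) ∧
    ((∃ N1 : ℕ, liftA n s (f - C γ) ∈ MATrunc n s f g N1) ↔
      (∃ N2 : ℕ, liftB n s (f - C γ) ∈ MBTrunc n s f g N2)) := by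
  rw [KKTOrthant.exists_mem_MATrunc_iff, KKTOrthant.exists_mem_MBTrunc_iff, and_self]
  exact KKTOrthant.liftA_mem_MA_iff f g _

end
end

section
/- Let f, g_1, …, g_s ∈ ℝ[x_1, …, x_n] and a, b ∈ ℝ^n with a_k < b_k for all k. For (x, λ) ∈ ℝ^n × ℝ^s with a ≤ x ≤ b, there exist ν, μ ∈ ℝ^n satisfying the box KKT system ∇f(x) + Σ_{i=1}^s λ_i ∇g_i(x) − ν + μ = 0, g_i(x) = 0 for all i, (x_k − a_k) ν_k = 0 and (b_k − x_k) μ_k = 0 for all k, if and only if g_1(x) = ⋯ = g_s(x) = 0 and (∂f/∂x_k(x) + Σ_{i=1}^s λ_i ∂g_i/∂x_k(x)) · (x_k − a_k)(b_k − x_k) = 0 for k = 1, …, n. In particular, the multipliers ν and μ can be eliminated from the KKT system for minimizing f subject to g_i(x) = 0 and x ∈ [a, b]_n. -/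
open MvPolynomial

/-- For the problem of minimizing `f` subject to `g_i(x) = 0` and
`x ∈ [a, b]_n` (with `a < b` componentwise), the multipliers `ν, μ` can be eliminated:
for `a ≤ x ≤ b`, there exist `ν, μ` with `∇f(x) + Σ_i λ_i ∇g_i(x) − ν + μ = 0`,
`g_i(x) = 0`, `(x_k − a_k) ν_k = 0`, `(b_k − x_k) μ_k = 0` if and only if `g_i(x) = 0`
for all `i` and `(∂f/∂x_k(x) + Σ_i λ_i ∂g_i/∂x_k(x)) (x_k − a_k)(b_k − x_k) = 0`
for all `k`. -/
theorem stmt17 (n s : ℕ) (f : MvPolynomial (Fin n) ℝ) (g : Fin s → MvPolynomial (Fin n) ℝ)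
    (a b : Fin n → ℝ) (hab : ∀ k, a k < b k)
    (x : Fin n → ℝ) (lam : Fin s → ℝ)
    (hax : ∀ k, a k ≤ x k) (hxb : ∀ k, x k ≤ b k) :
    (∃ nu mu : Fin n → ℝ,
      (∀ k, eval x (pderiv k f) + (∑ i, lam i * eval x (pderiv k (g i)))
        - nu k + mu k = 0) ∧
      (∀ i, eval x (g i) = 0) ∧
      (∀ k, (x k - a k) * nu k = 0) ∧
      (∀ k, (b k - x k) * mu k = 0))
    ↔
    ((∀ i, eval x (g i) = 0) ∧
      (∀ k, (eval x (pderiv k f) + ∑ i, lam i * eval x (pderiv k (g i)))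
        * ((x k - a k) * (b k - x k)) = 0)) := by
  set L : Fin n → ℝ := fun k => eval x (pderiv k f) + ∑ i, lam i * eval x (pderiv k (g i))
    with hL
  constructor
  · rintro ⟨nu, mu, heq, hg, hnu, hmu⟩
    refine ⟨hg, fun k => ?_⟩
    have h1 : L k = nu k - mu k := by have := heq k; simp only [hL]; linarith
    have h2 := hnu k
    have h3 := hmu k
    calc L k * ((x k - a k) * (b k - x k))
        = (b k - x k) * ((x k - a k) * nu k) - (x k - a k) * ((b k - x k) * mu k) := by
          rw [h1]; ring
      _ = 0 := by rw [h2, h3]; ring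
  · rintro ⟨hg, hcomp⟩
    refine ⟨fun k => if x k = a k then L k else 0,
            fun k => if x k = a k then 0 else -(L k), fun k => ?_, hg, fun k => ?_, fun k => ?_⟩
    · by_cases h : x k = a k <;> simp [h, hL] <;> ring
    · by_cases h : x k = a k <;> simp [h]
    · by_cases h : x k = a k
      · simp [h]
      · simp only [h, if_false]
        have := hcomp k
        have hx : x k - a k ≠ 0 := sub_ne_zero.mpr h
        have : L k * (b k - x k) = 0 := by
          rcases mul_eq_zero.mp (by rw [show L k * ((x k - a k) * (b k - x k)) =
            (L k * (b k - x k)) * (x k - a k) by ring] at this; exact this) with h' | h'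
          · exact h'
          · exact absurd h' hx
        nlinarith [this]
end
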